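/- arXiv:2209.01991 — 5 statements merged into one kernel-verified Lean document; each statement's English description precedes it below -/
import Mathlib

section
/- For a nonnegative n×n matrix A, a positive real α, and a nonzero nonnegative vector x, if αx ≤ Ax (entrywise), then α ≤ ρ(A), where ρ(A) denotes the spectral radius (Perron root) of A. -/
open Matrix Finset

/-- The Perron root: the largest nonnegative real eigenvalue of a matrix. -/
noncomputable def perronRoot {n : ℕ} (A : Matrix (Fin n) (Fin n) ℝ) : ℝ :=
  sSup {r : ℝ | 0 ≤ r ∧ ∃ v : Fin n → ℝ, v ≠ 0 ∧ A.mulVec v = r • v}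

/-- Ω(A): matrices obtained by permuting the entries within each row of A independently. -/
def Omega {n : ℕ} (A : Matrix (Fin n) (Fin n) ℝ) : Set (Matrix (Fin n) (Fin n) ℝ) :=
  {B | ∀ i, ∃ φ : Equiv.Perm (Fin n), ∀ j, B i j = A i (φ j)}

/-- Irreducibility: the directed graph of the matrix is strongly connected. -/
def Irred {n : ℕ} (A : Matrix (Fin n) (Fin n) ℝ) : Prop :=
  ∀ i j, ∃ m : ℕ, 0 < m ∧ 0 < (A ^ m) i j

section Helpers

open Filter Topology

-- helper: bound on t from t • y ≤ A y on the simplex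
lemma t_le_M {n : ℕ} (A : Matrix (Fin n) (Fin n) ℝ) (hA : ∀ i j, 0 ≤ A i j)
    (t : ℝ) (y : Fin n → ℝ) (hy : ∀ i, 0 ≤ y i) (hy1 : ∑ i, y i = 1)
    (hty : ∀ i, t * y i ≤ A.mulVec y i) : t ≤ ∑ i, ∑ j, A i j := by
  have hyle : ∀ j, y j ≤ 1 := by
    intro j
    rw [← hy1]
    exact Finset.single_le_sum (fun i _ => hy i) (Finset.mem_univ j)
  calc t = ∑ i, t * y i := by rw [← Finset.mul_sum, hy1, mul_one]
    _ ≤ ∑ i, A.mulVec y i := Finset.sum_le_sum fun i _ => hty i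
    _ = ∑ i, ∑ j, A i j * y j := by simp [Matrix.mulVec, dotProduct]
    _ ≤ ∑ i, ∑ j, A i j := by
        refine Finset.sum_le_sum fun i _ => Finset.sum_le_sum fun j _ => ?_
        calc A i j * y j ≤ A i j * 1 := by
              exact mul_le_mul_of_nonneg_left (hyle j) (hA i j)
          _ = A i j := mul_one _

lemma key_pos {n : ℕ} (A : Matrix (Fin n) (Fin n) ℝ) (hA : ∀ i j, 0 < A i j)
    (α : ℝ) (hα : 0 < α) (x : Fin n → ℝ) (hx : ∀ i, 0 ≤ x i) (hx0 : x ≠ 0)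
    (h : ∀ i, α * x i ≤ A.mulVec x i) :
    ∃ r v, α ≤ r ∧ r ≤ ∑ i, ∑ j, A i j ∧ (∀ i, 0 ≤ v i) ∧ (∑ i, v i) = 1 ∧
      A.mulVec v = r • v := by
  classical
  set M : ℝ := ∑ i, ∑ j, A i j with hM
  -- the compact set K
  set K : Set (ℝ × (Fin n → ℝ)) :=
    {p | α ≤ p.1 ∧ (∀ i, 0 ≤ p.2 i) ∧ (∑ i, p.2 i) = 1 ∧
      ∀ i, p.1 * p.2 i ≤ A.mulVec p.2 i} with hK
  have hAnn : ∀ i j, 0 ≤ A i j := fun i j => (hA i j).le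
  -- sum of x is positive
  have hsx : 0 < ∑ i, x i := by
    rcases Function.ne_iff.1 hx0 with ⟨i, hi⟩
    have : 0 < x i := lt_of_le_of_ne (hx i) (Ne.symm hi)
    exact Finset.sum_pos' (fun j _ => hx j) ⟨i, Finset.mem_univ i, this⟩
  -- normalized x is in K
  have hxK : (α, (∑ i, x i)⁻¹ • x) ∈ K := by
    refine ⟨le_refl α, fun i => by
      simp only [Pi.smul_apply, smul_eq_mul]
      exact mul_nonneg (inv_nonneg.2 hsx.le) (hx i), ?_, ?_⟩
    · simp only [Pi.smul_apply, smul_eq_mul]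
      rw [← Finset.mul_sum]
      field_simp
    · intro i
      have := h i
      have hmul : A.mulVec ((∑ i, x i)⁻¹ • x) i = (∑ i, x i)⁻¹ * A.mulVec x i := by
        simp [Matrix.mulVec_smul]
      rw [hmul]
      simp only [Pi.smul_apply, smul_eq_mul]
      have hinv : (0:ℝ) ≤ (∑ i, x i)⁻¹ := by positivity
      calc α * ((∑ i, x i)⁻¹ * x i) = (∑ i, x i)⁻¹ * (α * x i) := by ring
        _ ≤ (∑ i, x i)⁻¹ * A.mulVec x i := by
            exact mul_le_mul_of_nonneg_left (h i) hinv
  -- K is compact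
  have hKsub : K ⊆ Set.Icc (α, fun _ => (0:ℝ)) (M, fun _ => (1:ℝ)) := by
    rintro ⟨t, y⟩ ⟨h1, h2, h3, h4⟩
    have hyle : ∀ j, y j ≤ 1 := by
      intro j
      rw [← h3]
      exact Finset.single_le_sum (fun i _ => h2 i) (Finset.mem_univ j)
    exact ⟨⟨h1, fun i => h2 i⟩, ⟨t_le_M A hAnn t y h2 h3 h4, fun i => hyle i⟩⟩
  have hKclosed : IsClosed K := by
    have c1 : IsClosed {p : ℝ × (Fin n → ℝ) | α ≤ p.1} :=
      isClosed_le continuous_const continuous_fst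
    have c2 : IsClosed {p : ℝ × (Fin n → ℝ) | ∀ i, 0 ≤ p.2 i} := by
      rw [Set.setOf_forall]
      exact isClosed_iInter fun i =>
        isClosed_le continuous_const ((continuous_apply i).comp continuous_snd)
    have c3 : IsClosed {p : ℝ × (Fin n → ℝ) | (∑ i, p.2 i) = 1} := by
      refine isClosed_eq ?_ continuous_const
      exact continuous_finset_sum _ fun i _ => (continuous_apply i).comp continuous_snd
    have c4 : IsClosed {p : ℝ × (Fin n → ℝ) | ∀ i, p.1 * p.2 i ≤ A.mulVec p.2 i} := by
      rw [Set.setOf_forall]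
      refine isClosed_iInter fun i => isClosed_le ?_ ?_
      · exact continuous_fst.mul ((continuous_apply i).comp continuous_snd)
      · have : (fun p : ℝ × (Fin n → ℝ) => A.mulVec p.2 i)
            = fun p => ∑ j, A i j * p.2 j := by
          funext p; simp [Matrix.mulVec, dotProduct]
        rw [this]
        exact continuous_finset_sum _ fun j _ =>
          continuous_const.mul ((continuous_apply j).comp continuous_snd)
    have : K = {p : ℝ × (Fin n → ℝ) | α ≤ p.1} ∩ ({p | ∀ i, 0 ≤ p.2 i} ∩
        ({p | (∑ i, p.2 i) = 1} ∩ {p | ∀ i, p.1 * p.2 i ≤ A.mulVec p.2 i})) := by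
      ext p; simp [hK, Set.mem_setOf_eq, and_assoc]
    rw [this]
    exact c1.inter (c2.inter (c3.inter c4))
  have hKcomp : IsCompact K := (isCompact_Icc).of_isClosed_subset hKclosed hKsub
  -- maximize the first coordinate on K
  obtain ⟨⟨β, y⟩, hmemK, hmax⟩ :=
    hKcomp.exists_isMaxOn ⟨_, hxK⟩ (continuous_fst.continuousOn)
  obtain ⟨hβα, hy0, hy1, hβy⟩ := hmemK
  have hβM : β ≤ M := t_le_M A hAnn β y hy0 hy1 hβy
  refine ⟨β, y, hβα, hβM, hy0, hy1, ?_⟩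
  -- show A y = β y; otherwise contradiction with maximality
  by_contra hne
  set w : Fin n → ℝ := fun i => A.mulVec y i - β * y i with hw
  have hw0 : ∀ i, 0 ≤ w i := fun i => sub_nonneg.2 (hβy i)
  have hwne : ∃ i, 0 < w i := by
    by_contra hc
    push_neg at hc
    apply hne
    funext i
    have : w i = 0 := le_antisymm (hc i) (hw0 i)
    have := sub_eq_zero.1 this
    simpa [Pi.smul_apply, smul_eq_mul] using this
  obtain ⟨i₀, hi₀⟩ := hwne
  -- z = A y is strictly positive
  set z : Fin n → ℝ := A.mulVec y with hz
  have hzpos : ∀ i, 0 < z i := by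
    intro i
    have : ∃ j, 0 < y j := by
      by_contra hc
      push_neg at hc
      have h0 : ∑ j, y j ≤ 0 := Finset.sum_nonpos fun j _ => hc j
      have h1 : ∑ j, y j = 1 := hy1
      linarith
    obtain ⟨j, hj⟩ := this
    have : 0 < ∑ k, A i k * y k :=
      Finset.sum_pos' (fun k _ => mul_nonneg (hAnn i k) (hy0 k))
        ⟨j, Finset.mem_univ j, mul_pos (hA i j) hj⟩
    simpa [hz, Matrix.mulVec, dotProduct] using this
  -- A w is strictly positive
  have hAwpos : ∀ i, 0 < A.mulVec w i := by
    intro i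
    have : 0 < ∑ k, A i k * w k :=
      Finset.sum_pos' (fun k _ => mul_nonneg (hAnn i k) (hw0 k))
        ⟨i₀, Finset.mem_univ i₀, mul_pos (hA i i₀) hi₀⟩
    simpa [Matrix.mulVec, dotProduct] using this
  -- choose δ = min over i of (A w) i / z i > 0
  have hn : 0 < n := Fin.pos i₀
  set δ : ℝ := Finset.univ.inf' (Finset.univ_nonempty_iff.2 ⟨i₀⟩ ) (fun i => A.mulVec w i / z i) with hδ
  have hδpos : 0 < δ := by
    apply Finset.lt_inf'_iff _ |>.2
    intro i _
    exact div_pos (hAwpos i) (hzpos i)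
  -- (β + δ) z ≤ A z
  have hkey : ∀ i, (β + δ) * z i ≤ A.mulVec z i := by
    intro i
    have hδle : δ ≤ A.mulVec w i / z i :=
      Finset.inf'_le _ (Finset.mem_univ i)
    have h1 : δ * z i ≤ A.mulVec w i := by
      rw [div_eq_mul_inv] at hδle
      calc δ * z i ≤ (A.mulVec w i * (z i)⁻¹) * z i :=
            mul_le_mul_of_nonneg_right hδle (hzpos i).le
        _ = A.mulVec w i := by
            rw [mul_assoc, inv_mul_cancel₀ (hzpos i).ne', mul_one]
    have hzeq : z = β • y + w := by
      funext k
      show z k = β * y k + (z k - β * y k)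
      ring
    have hzw : A.mulVec z = β • z + A.mulVec w := by
      calc A.mulVec z = A.mulVec (β • y + w) := by rw [← hzeq]
        _ = β • A.mulVec y + A.mulVec w := by
            rw [Matrix.mulVec_add, Matrix.mulVec_smul]
        _ = β • z + A.mulVec w := by rw [← hz]
    have h2 : A.mulVec z i = β * z i + A.mulVec w i := by
      have := congrFun hzw i
      simpa [Pi.smul_apply, smul_eq_mul] using this
    rw [h2]; linarith
  -- normalize z and contradict maximality
  have hsz : 0 < ∑ i, z i :=
    Finset.sum_pos (fun i _ => hzpos i) (Finset.univ_nonempty_iff.2 ⟨i₀⟩)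
  have hmemK2 : (β + δ, (∑ i, z i)⁻¹ • z) ∈ K := by
    refine ⟨by linarith, fun i => by
      simp only [Pi.smul_apply, smul_eq_mul]
      exact mul_nonneg (by positivity) (hzpos i).le, ?_, ?_⟩
    · simp only [Pi.smul_apply, smul_eq_mul]
      rw [← Finset.mul_sum]
      field_simp
    · intro i
      have hmul : A.mulVec ((∑ i, z i)⁻¹ • z) i = (∑ i, z i)⁻¹ * A.mulVec z i := by
        simp [Matrix.mulVec_smul]
      rw [hmul]
      simp only [Pi.smul_apply, smul_eq_mul]
      have hinv : (0:ℝ) ≤ (∑ i, z i)⁻¹ := by positivity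
      calc (β + δ) * ((∑ i, z i)⁻¹ * z i) = (∑ i, z i)⁻¹ * ((β + δ) * z i) := by ring
        _ ≤ (∑ i, z i)⁻¹ * A.mulVec z i :=
            mul_le_mul_of_nonneg_left (hkey i) hinv
  have := hmax hmemK2
  simp only [Set.mem_setOf_eq] at this
  linarith [this]

lemma eig_bdd {n : ℕ} (A : Matrix (Fin n) (Fin n) ℝ) (hA : ∀ i j, 0 ≤ A i j) :
    BddAbove {r : ℝ | 0 ≤ r ∧ ∃ v : Fin n → ℝ, v ≠ 0 ∧ A.mulVec v = r • v} := by
  refine ⟨∑ i, ∑ j, A i j, ?_⟩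
  rintro r ⟨hr, v, hv, hAv⟩
  have hne : (Finset.univ : Finset (Fin n)).Nonempty := by
    rcases Function.ne_iff.1 hv with ⟨i, _⟩; exact ⟨i, Finset.mem_univ i⟩
  obtain ⟨i, -, hi⟩ := Finset.exists_max_image Finset.univ (fun i => |v i|) hne
  have hvi : 0 < |v i| := by
    rcases Function.ne_iff.1 hv with ⟨j, hj⟩
    have h1 : 0 < |v j| := abs_pos.2 hj
    linarith [hi j (Finset.mem_univ j)]
  have hmain : r * |v i| ≤ (∑ i, ∑ j, A i j) * |v i| := by
    have h1 : r * |v i| = |A.mulVec v i| := by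
      rw [congrFun hAv i]
      simp only [Pi.smul_apply, smul_eq_mul, abs_mul, abs_of_nonneg hr]
    have h2 : |A.mulVec v i| ≤ ∑ j, A i j * |v j| := by
      have : A.mulVec v i = ∑ j, A i j * v j := by simp [Matrix.mulVec, dotProduct]
      rw [this]
      calc |∑ j, A i j * v j| ≤ ∑ j, |A i j * v j| :=
            Finset.abs_sum_le_sum_abs _ _
        _ = ∑ j, A i j * |v j| := by
            refine Finset.sum_congr rfl fun j _ => ?_
            rw [abs_mul, abs_of_nonneg (hA i j)]
    have h3 : ∑ j, A i j * |v j| ≤ ∑ j, A i j * |v i| :=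
      Finset.sum_le_sum fun j _ =>
        mul_le_mul_of_nonneg_left (hi j (Finset.mem_univ j)) (hA i j)
    have h4 : (∑ j, A i j) ≤ ∑ i', ∑ j, A i' j :=
      Finset.single_le_sum (fun i' _ => Finset.sum_nonneg fun j _ => hA i' j)
        (Finset.mem_univ i)
    calc r * |v i| = |A.mulVec v i| := h1
      _ ≤ ∑ j, A i j * |v j| := h2
      _ ≤ ∑ j, A i j * |v i| := h3
      _ = (∑ j, A i j) * |v i| := by rw [Finset.sum_mul]
      _ ≤ (∑ i, ∑ j, A i j) * |v i| :=
          mul_le_mul_of_nonneg_right h4 (abs_nonneg _)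
  exact le_of_mul_le_mul_right hmain hvi

theorem stmt0' {n : ℕ} (A : Matrix (Fin n) (Fin n) ℝ) (hA : ∀ i j, 0 ≤ A i j)
    (α : ℝ) (hα : 0 < α) (x : Fin n → ℝ) (hx : ∀ i, 0 ≤ x i) (hx0 : x ≠ 0)
    (h : ∀ i, α * x i ≤ A.mulVec x i) :
    α ≤ sSup {r : ℝ | 0 ≤ r ∧ ∃ v : Fin n → ℝ, v ≠ 0 ∧ A.mulVec v = r • v} := by
  classical
  set M : ℝ := ∑ i, ∑ j, A i j with hM
  -- the perturbed matrices
  set c : ℕ → ℝ := fun k => ((k : ℝ) + 1)⁻¹ with hc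
  have hcpos : ∀ k, 0 < c k := fun k => by positivity
  have hcle : ∀ k, c k ≤ 1 := fun k => by
    rw [hc]
    simp only
    rw [inv_le_one_iff₀]
    right; linarith [Nat.cast_nonneg (α := ℝ) k]
  set Ak : ℕ → Matrix (Fin n) (Fin n) ℝ :=
    fun k => Matrix.of fun i j => A i j + c k with hAk
  have hAkmul : ∀ k (v : Fin n → ℝ) i,
      (Ak k).mulVec v i = A.mulVec v i + c k * ∑ j, v j := by
    intro k v i
    simp only [hAk, Matrix.mulVec, dotProduct, Matrix.of_apply, add_mul,
      Finset.sum_add_distrib, Finset.mul_sum]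
  -- apply key_pos to each Ak
  have hkey : ∀ k, ∃ r v, α ≤ r ∧ r ≤ ∑ i, ∑ j, (Ak k) i j ∧ (∀ i, 0 ≤ v i) ∧
      (∑ i, v i) = 1 ∧ (Ak k).mulVec v = r • v := by
    intro k
    apply key_pos
    · intro i j
      simp only [hAk, Matrix.of_apply]
      have := hA i j; have := hcpos k; linarith
    · exact hα
    · exact hx
    · exact hx0
    · intro i
      rw [hAkmul]
      have h1 : 0 ≤ c k * ∑ j, x j :=
        mul_nonneg (hcpos k).le (Finset.sum_nonneg fun j _ => hx j)
      linarith [h i]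
  choose r v hr1 hr2 hv1 hv2 hv3 using hkey
  -- uniform bound on r
  have hrM : ∀ k, r k ≤ M + n * n := by
    intro k
    refine (hr2 k).trans ?_
    have : ∑ i, ∑ j, (Ak k) i j = M + n * n * c k := by
      simp only [hAk, Matrix.of_apply, Finset.sum_add_distrib, Finset.sum_const,
        Finset.card_univ, Fintype.card_fin, nsmul_eq_mul, hM]
      ring
    rw [this]
    have h1 : (n : ℝ) * n * c k ≤ n * n * 1 := by
      refine mul_le_mul_of_nonneg_left (hcle k) ?_
      positivity
    linarith
  -- the compact set C
  set C : Set (ℝ × (Fin n → ℝ)) :=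
    {p | α ≤ p.1 ∧ p.1 ≤ M + n * n ∧ (∀ i, 0 ≤ p.2 i) ∧ (∑ i, p.2 i) = 1} with hC
  have hCsub : C ⊆ Set.Icc (α, fun _ => (0:ℝ)) (M + n * n, fun _ => (1:ℝ)) := by
    rintro ⟨t, y⟩ ⟨h1, h2, h3, h4⟩
    have hyle : ∀ j, y j ≤ 1 := by
      intro j
      rw [← h4]
      exact Finset.single_le_sum (fun i _ => h3 i) (Finset.mem_univ j)
    exact ⟨⟨h1, fun i => h3 i⟩, ⟨h2, fun i => hyle i⟩⟩
  have hCclosed : IsClosed C := by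
    have c1 : IsClosed {p : ℝ × (Fin n → ℝ) | α ≤ p.1} :=
      isClosed_le continuous_const continuous_fst
    have c2 : IsClosed {p : ℝ × (Fin n → ℝ) | p.1 ≤ M + n * n} :=
      isClosed_le continuous_fst continuous_const
    have c3 : IsClosed {p : ℝ × (Fin n → ℝ) | ∀ i, 0 ≤ p.2 i} := by
      rw [Set.setOf_forall]
      exact isClosed_iInter fun i =>
        isClosed_le continuous_const ((continuous_apply i).comp continuous_snd)
    have c4 : IsClosed {p : ℝ × (Fin n → ℝ) | (∑ i, p.2 i) = 1} := by
      refine isClosed_eq ?_ continuous_const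
      exact continuous_finset_sum _ fun i _ => (continuous_apply i).comp continuous_snd
    have : C = {p : ℝ × (Fin n → ℝ) | α ≤ p.1} ∩ ({p | p.1 ≤ M + n * n} ∩
        ({p | ∀ i, 0 ≤ p.2 i} ∩ {p | (∑ i, p.2 i) = 1})) := by
      ext p; simp [hC, Set.mem_setOf_eq, and_assoc]
    rw [this]
    exact c1.inter (c2.inter (c3.inter c4))
  have hCcomp : IsCompact C := (isCompact_Icc).of_isClosed_subset hCclosed hCsub
  -- the sequence and its convergent subsequence
  set p : ℕ → ℝ × (Fin n → ℝ) := fun k => (r k, v k) with hp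
  have hpC : ∀ k, p k ∈ C := fun k => ⟨hr1 k, hrM k, hv1 k, hv2 k⟩
  obtain ⟨a, haC, φ, hφ, hlim⟩ := hCcomp.tendsto_subseq hpC
  obtain ⟨ρ, u⟩ := a
  obtain ⟨hρα, hρM, hu0, hu1⟩ := haC
  -- the limit is an eigenpair of A
  set F : ℝ × (Fin n → ℝ) → Fin n → ℝ :=
    fun q => A.mulVec q.2 - q.1 • q.2 with hF
  have hFc : Continuous F := by
    have h1 : Continuous fun q : ℝ × (Fin n → ℝ) => A.mulVec q.2 := by
      apply continuous_pi
      intro i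
      have : (fun q : ℝ × (Fin n → ℝ) => A.mulVec q.2 i)
          = fun q => ∑ j, A i j * q.2 j := by
        funext q; simp [Matrix.mulVec, dotProduct]
      rw [this]
      exact continuous_finset_sum _ fun j _ =>
        continuous_const.mul ((continuous_apply j).comp continuous_snd)
    exact h1.sub (continuous_fst.smul continuous_snd)
  have hlim1 : Filter.Tendsto (fun k => F (p (φ k))) Filter.atTop (𝓝 (F (ρ, u))) :=
    (hFc.tendsto _).comp hlim
  -- F (p k) = -(c k) • 1
  have hFval : ∀ k, F (p k) = (-(c k)) • (fun _ => (1:ℝ)) := by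
    intro k
    funext i
    have h1 := congrFun (hv3 k) i
    rw [hAkmul, hv2 k, mul_one] at h1
    simp only [hF, hp, Pi.sub_apply, Pi.smul_apply, smul_eq_mul]
    have : (r k • v k) i = r k * v k i := rfl
    rw [this] at h1
    linarith
  have hczero : Filter.Tendsto (fun k => c (φ k)) Filter.atTop (𝓝 0) := by
    have h1 : Filter.Tendsto c Filter.atTop (𝓝 0) := by
      have := tendsto_one_div_add_atTop_nhds_zero_nat (𝕜 := ℝ)
      simpa [hc, one_div] using this
    exact h1.comp hφ.tendsto_atTop
  have hlim2 : Filter.Tendsto (fun k => F (p (φ k))) Filter.atTop (𝓝 0) := by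
    have h1 : Filter.Tendsto (fun k => (-(c (φ k))) • (fun _ => (1:ℝ)))
        Filter.atTop (𝓝 ((-(0:ℝ)) • (fun _ : Fin n => (1:ℝ)))) :=
      hczero.neg.smul (tendsto_const_nhds (x := fun _ : Fin n => (1:ℝ)))
    simp only [neg_zero, zero_smul] at h1
    refine h1.congr fun k => ?_
    rw [hFval (φ k)]
  have hFzero : F (ρ, u) = 0 := tendsto_nhds_unique hlim1 hlim2
  have heig : A.mulVec u = ρ • u := by
    have := sub_eq_zero.1 hFzero
    exact this
  -- conclude
  have hune : u ≠ 0 := by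
    intro h0
    rw [h0] at hu1
    simp at hu1
  have hmem : ρ ∈ {r : ℝ | 0 ≤ r ∧ ∃ v : Fin n → ℝ, v ≠ 0 ∧ A.mulVec v = r • v} :=
    ⟨le_trans hα.le hρα, u, hune, heig⟩
  exact le_trans hρα (le_csSup (eig_bdd A hA) hmem)

end Helpers

theorem stmt0 {n : ℕ} (A : Matrix (Fin n) (Fin n) ℝ) (hA : ∀ i j, 0 ≤ A i j)
    (α : ℝ) (hα : 0 < α) (x : Fin n → ℝ) (hx : ∀ i, 0 ≤ x i) (hx0 : x ≠ 0)
    (h : ∀ i, α * x i ≤ A.mulVec x i) :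
    α ≤ perronRoot A := by
  unfold perronRoot
  exact stmt0' A hA α hα x hx hx0 h
end

section
/- Let A be an irreducible nonnegative n×n matrix with ρ(A) = max over B ∈ Ω(A) of ρ(B), and let x be a Perron eigenvector of A. Then for all indices i, j, k: x_k < x_j implies a_{i,k} ≤ a_{i,j}. -/
open Matrix Finset

section Aux

variable {n : ℕ}

lemma pow_entry_nonneg {A : Matrix (Fin n) (Fin n) ℝ} (hA : ∀ i j, 0 ≤ A i j) :
    ∀ m i j, 0 ≤ (A ^ m) i j := by
  intro m
  induction m with
  | zero =>
    intro i j
    rw [pow_zero]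
    by_cases h : i = j <;> simp [Matrix.one_apply, h]
  | succ m ih =>
    intro i j
    rw [pow_succ, Matrix.mul_apply]
    exact Finset.sum_nonneg fun l _ => mul_nonneg (ih i l) (hA l j)

lemma mulVec_apply' (M : Matrix (Fin n) (Fin n) ℝ) (v : Fin n → ℝ) (l : Fin n) :
    M.mulVec v l = ∑ m, M l m * v m := by
  simp [Matrix.mulVec, dotProduct]

lemma mulVec_le_mulVec {M : Matrix (Fin n) (Fin n) ℝ} (hM : ∀ i j, 0 ≤ M i j)
    {u v : Fin n → ℝ} (h : ∀ l, u l ≤ v l) (l : Fin n) :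
    M.mulVec u l ≤ M.mulVec v l := by
  rw [mulVec_apply', mulVec_apply']
  exact Finset.sum_le_sum fun m _ => mul_le_mul_of_nonneg_left (h m) (hM l m)

lemma pow_mulVec_eig {A : Matrix (Fin n) (Fin n) ℝ} {r : ℝ} {x : Fin n → ℝ}
    (heig : A.mulVec x = r • x) (m : ℕ) : (A ^ m).mulVec x = r ^ m • x := by
  induction m with
  | zero => simp
  | succ m ih =>
    rw [pow_succ, ← Matrix.mulVec_mulVec, heig, Matrix.mulVec_smul, ih, smul_smul,
      ← pow_succ']

lemma pow_mulVec_ge {A : Matrix (Fin n) (Fin n) ℝ} (hA : ∀ i j, 0 ≤ A i j)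
    {t : ℝ} (ht : 0 ≤ t) {w : Fin n → ℝ}
    (h : ∀ l, t * w l ≤ A.mulVec w l) (m : ℕ) :
    ∀ l, t ^ m * w l ≤ (A ^ m).mulVec w l := by
  induction m with
  | zero => intro l; simp
  | succ m ih =>
    intro l
    have h1 : (A ^ (m + 1)).mulVec w l = (A ^ m).mulVec (A.mulVec w) l := by
      rw [pow_succ, ← Matrix.mulVec_mulVec]
    have h2 : (A ^ m).mulVec (t • w) l ≤ (A ^ m).mulVec (A.mulVec w) l :=
      mulVec_le_mulVec (pow_entry_nonneg hA m) (fun l' => by simpa using h l') l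
    have h3 : (A ^ m).mulVec (t • w) l = t * (A ^ m).mulVec w l := by
      rw [Matrix.mulVec_smul]; rfl
    have h4 : t * (t ^ m * w l) ≤ t * (A ^ m).mulVec w l :=
      mul_le_mul_of_nonneg_left (ih l) ht
    calc t ^ (m + 1) * w l = t * (t ^ m * w l) := by ring
      _ ≤ t * (A ^ m).mulVec w l := h4
      _ = (A ^ m).mulVec (t • w) l := h3.symm
      _ ≤ (A ^ m).mulVec (A.mulVec w) l := h2
      _ = (A ^ (m + 1)).mulVec w l := h1.symm

lemma eig_unique {A : Matrix (Fin n) (Fin n) ℝ} (hA : ∀ i j, 0 ≤ A i j) (hirr : Irred A)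
    {x : Fin n → ℝ} (hxpos : ∀ i, 0 < x i) {ρ : ℝ} (heig : A.mulVec x = ρ • x)
    (hn : 0 < n) {v : Fin n → ℝ} (hv : A.mulVec v = ρ • v) : ∃ s : ℝ, v = s • x := by
  obtain ⟨a, -, ha⟩ := Finset.exists_min_image Finset.univ (fun l => v l / x l)
    ⟨⟨0, hn⟩, Finset.mem_univ _⟩
  set s := v a / x a with hs
  refine ⟨s, ?_⟩
  set w := v - s • x with hw
  have hweig : A.mulVec w = ρ • w := by
    rw [hw, Matrix.mulVec_sub, Matrix.mulVec_smul, hv, heig, smul_sub, smul_smul, smul_smul,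
      mul_comm]
  have hwnn : ∀ l, 0 ≤ w l := by
    intro l
    have h1 : s ≤ v l / x l := ha l (Finset.mem_univ l)
    have h2 : s * x l ≤ v l := by
      rw [← le_div_iff₀ (hxpos l)]; exact h1
    simp only [hw, Pi.sub_apply, Pi.smul_apply, smul_eq_mul]
    linarith
  have hwa : w a = 0 := by
    simp only [hw, Pi.sub_apply, Pi.smul_apply, smul_eq_mul, hs]
    rw [div_mul_cancel₀ _ (hxpos a).ne']
    ring
  by_cases hw0 : w = 0
  · have : v - s • x = 0 := hw ▸ hw0
    rw [sub_eq_zero] at this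
    exact this
  · exfalso
    obtain ⟨b, hb⟩ : ∃ b, 0 < w b := by
      by_contra hcon
      push_neg at hcon
      exact hw0 (funext fun l => le_antisymm (hcon l) (hwnn l))
    obtain ⟨m, hm0, hmpos⟩ := hirr a b
    have h1 : (A ^ m).mulVec w = ρ ^ m • w := pow_mulVec_eig hweig m
    have h2 : (A ^ m) a b * w b ≤ (A ^ m).mulVec w a := by
      rw [mulVec_apply']
      exact Finset.single_le_sum (f := fun l => (A ^ m) a l * w l)
        (fun l _ => mul_nonneg (pow_entry_nonneg hA m a l) (hwnn l)) (Finset.mem_univ b)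
    rw [h1] at h2
    have h3 : (ρ ^ m • w) a = 0 := by simp [hwa]
    rw [h3] at h2
    nlinarith [mul_pos hmpos hb]

lemma no_eigen_ge {A : Matrix (Fin n) (Fin n) ℝ} (hA : ∀ i j, 0 ≤ A i j) (hirr : Irred A)
    {x : Fin n → ℝ} (hxpos : ∀ i, 0 < x i) {ρ : ℝ} (hρ : 0 < ρ)
    (heig : A.mulVec x = ρ • x) (i : Fin n) {t : ℝ} (ht : ρ ≤ t)
    {v : Fin n → ℝ} (hv : (A.updateRow i 0).mulVec v = t • v) : v = 0 := by
  by_contra hv0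
  set M := A.updateRow i 0 with hM
  have hMnn : ∀ l m, 0 ≤ M l m := by
    intro l m
    by_cases h : l = i
    · subst h; simp [hM]
    · simp [hM, Matrix.updateRow_ne h]; exact hA l m
  have ht0 : 0 < t := lt_of_lt_of_le hρ ht
  have hvi : v i = 0 := by
    have h1 : M.mulVec v i = 0 := by
      rw [mulVec_apply']
      apply Finset.sum_eq_zero
      intro m _
      simp [hM, Matrix.updateRow_self]
    have h2 : M.mulVec v i = t * v i := by rw [hv]; rfl
    have h3 : t * v i = 0 := h2.symm.trans h1
    exact (mul_eq_zero.mp h3).resolve_left ht0.ne'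
  set w : Fin n → ℝ := fun l => |v l| with hwdef
  have hwi : w i = 0 := by simp [hwdef, hvi]
  have hwnn : ∀ l, 0 ≤ w l := fun l => abs_nonneg _
  have hwkey : ∀ l, t * w l ≤ A.mulVec w l := by
    intro l
    by_cases hl : l = i
    · rw [hl, hwi, mul_zero, mulVec_apply']
      exact Finset.sum_nonneg fun m _ => mul_nonneg (hA i m) (hwnn m)
    · have h1 : M.mulVec v l = t * v l := by rw [hv]; rfl
      have h2 : |M.mulVec v l| = t * w l := by
        rw [h1, abs_mul, abs_of_pos ht0]
      have h3 : |M.mulVec v l| ≤ A.mulVec w l := by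
        rw [mulVec_apply', mulVec_apply']
        calc |∑ m, M l m * v m| ≤ ∑ m, |M l m * v m| := Finset.abs_sum_le_sum_abs _ _
          _ = ∑ m, A l m * w m := by
            apply Finset.sum_congr rfl
            intro m _
            rw [abs_mul, abs_of_nonneg (hMnn l m), hM, Matrix.updateRow_ne hl]
      linarith [h2, h3]
  obtain ⟨b, hb⟩ : ∃ b, 0 < w b := by
    by_contra hcon
    push_neg at hcon
    exact hv0 (funext fun l => abs_eq_zero.mp (le_antisymm (hcon l) (hwnn l)))
  obtain ⟨a, -, ha⟩ := Finset.exists_max_image Finset.univ (fun l => w l / x l)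
    ⟨i, Finset.mem_univ _⟩
  set s := w a / x a with hs
  have hsle : ∀ l, w l ≤ s * x l := by
    intro l
    have h1 : w l / x l ≤ s := ha l (Finset.mem_univ l)
    rw [div_le_iff₀ (hxpos l)] at h1
    linarith
  have hspos : 0 < s := by
    have h1 : w b / x b ≤ s := ha b (Finset.mem_univ b)
    have h2 : 0 < w b / x b := div_pos hb (hxpos b)
    linarith
  have hwa : w a = s * x a := by
    rw [hs, div_mul_cancel₀ _ (hxpos a).ne']
  have hai : a ≠ i := by
    intro h
    rw [h, hwi] at hwa
    nlinarith [hxpos i]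
  -- t ≤ ρ
  have hAsx : A.mulVec (s • x) = s • (ρ • x) := by rw [Matrix.mulVec_smul, heig]
  have hle1 : t * w a ≤ A.mulVec w a := hwkey a
  have hle2 : A.mulVec w a ≤ A.mulVec (s • x) a := by
    apply mulVec_le_mulVec hA
    intro l; simpa using hsle l
  have hle3 : A.mulVec (s • x) a = s * (ρ * x a) := by rw [hAsx]; rfl
  have htρ : t ≤ ρ := by
    have hh := hle1.trans (hle2.trans_eq hle3)
    rw [hwa] at hh
    nlinarith [mul_pos hspos (hxpos a)]
  have teq : t = ρ := le_antisymm htρ ht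
  subst teq
  obtain ⟨m, hm0, hmpos⟩ := hirr a i
  have hlow : t ^ m * w a ≤ (A ^ m).mulVec w a := pow_mulVec_ge hA ht0.le hwkey m a
  have hsum : w + (s • x - w) = s • x := by abel
  have hsplit : (A ^ m).mulVec (s • x) a
      = (A ^ m).mulVec w a + (A ^ m).mulVec (s • x - w) a := by
    conv_lhs => rw [← hsum]
    rw [Matrix.mulVec_add]
    rfl
  have hup : (A ^ m).mulVec (s • x) a = s * (t ^ m * x a) := by
    rw [Matrix.mulVec_smul, pow_mulVec_eig heig m]
    rfl
  have h0 : ∀ l, 0 ≤ (s • x - w) l := by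
    intro l
    have := hsle l
    simp only [Pi.sub_apply, Pi.smul_apply, smul_eq_mul]
    linarith
  have hterm : (A ^ m) a i * (s * x i) ≤ (A ^ m).mulVec (s • x - w) a := by
    rw [mulVec_apply']
    have hsingle := Finset.single_le_sum (f := fun l => (A ^ m) a l * (s • x - w) l)
      (fun l _ => mul_nonneg (pow_entry_nonneg hA m a l) (h0 l)) (Finset.mem_univ i)
    simpa [hwi] using hsingle
  rw [hwa] at hlow
  have hpos : 0 < (A ^ m) a i * (s * x i) := mul_pos hmpos (mul_pos hspos (hxpos i))
  have e : s * (t ^ m * x a) = t ^ m * (s * x a) := by ring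
  linarith


lemma exists_det_pos {n : ℕ} (M : Matrix (Fin n) (Fin n) ℝ) (c : ℝ) :
    ∃ T : ℝ, c < T ∧ 0 < ((T : ℝ) • (1 : Matrix (Fin n) (Fin n) ℝ) - M).det := by
  have h0 : Filter.Tendsto (fun t : ℝ => (1 : Matrix (Fin n) (Fin n) ℝ) - t⁻¹ • M)
      Filter.atTop (nhds 1) := by
    have h00 := (tendsto_inv_atTop_zero (𝕜 := ℝ)).smul_const M
    simpa using Filter.Tendsto.const_sub (1 : Matrix (Fin n) (Fin n) ℝ) h00
  have hdet : Continuous fun N : Matrix (Fin n) (Fin n) ℝ => N.det :=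
    Continuous.matrix_det continuous_id
  have h1 : Filter.Tendsto (fun t : ℝ => ((1 : Matrix (Fin n) (Fin n) ℝ) - t⁻¹ • M).det)
      Filter.atTop (nhds 1) := by
    have := (hdet.tendsto 1).comp h0
    rwa [Matrix.det_one] at this
  have h2 : ∀ᶠ t in Filter.atTop, 0 < ((1 : Matrix (Fin n) (Fin n) ℝ) - t⁻¹ • M).det :=
    h1.eventually (eventually_gt_nhds one_pos)
  obtain ⟨T, hT⟩ := (h2.and (Filter.eventually_gt_atTop (max c 0))).exists
  have hT0 : 0 < T := lt_of_le_of_lt (le_max_right _ _) hT.2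
  refine ⟨T, lt_of_le_of_lt (le_max_left _ _) hT.2, ?_⟩
  have hfac : (T • (1 : Matrix (Fin n) (Fin n) ℝ) - M)
      = T • ((1 : Matrix (Fin n) (Fin n) ℝ) - T⁻¹ • M) := by
    rw [smul_sub, smul_smul, mul_inv_cancel₀ hT0.ne', one_smul]
  rw [hfac, det_smul]
  exact mul_pos (pow_pos hT0 _) hT.1

lemma continuous_detfun {n : ℕ} (M : Matrix (Fin n) (Fin n) ℝ) :
    Continuous fun t : ℝ => (t • (1 : Matrix (Fin n) (Fin n) ℝ) - M).det :=
  Continuous.matrix_det ((continuous_id.smul continuous_const).sub continuous_const)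

end Aux

theorem stmt5 {n : ℕ} (A : Matrix (Fin n) (Fin n) ℝ) (hA : ∀ i j, 0 ≤ A i j)
    (hirr : Irred A)
    (hmax : perronRoot A = sSup (perronRoot '' Omega A))
    (x : Fin n → ℝ) (hxpos : ∀ i, 0 < x i) (heig : A.mulVec x = perronRoot A • x) :
    ∀ i j k, x k < x j → A i k ≤ A i j := by
  intro i j k hxjk
  by_contra hlt
  push_neg at hlt
  set ρ := perronRoot A with hρdef
  have hn : 0 < n := i.pos
  have hxne : x ≠ 0 := by
    intro h
    have := hxpos i
    rw [h] at this
    simp at this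
  have hρ0 : 0 ≤ ρ := by
    have h1 : A.mulVec x i = ρ * x i := by rw [heig]; rfl
    have h2 : 0 ≤ A.mulVec x i := by
      rw [mulVec_apply']
      exact Finset.sum_nonneg fun m _ => mul_nonneg (hA i m) (hxpos m).le
    nlinarith [hxpos i]
  have hρ : 0 < ρ := by
    rcases eq_or_lt_of_le hρ0 with h | h
    · exfalso
      obtain ⟨m, hm0, hmpos⟩ := hirr i i
      have h1 : (A ^ m).mulVec x = ρ ^ m • x := pow_mulVec_eig heig m
      have h2 : (A ^ m) i i * x i ≤ (A ^ m).mulVec x i := by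
        rw [mulVec_apply']
        exact Finset.single_le_sum (f := fun l => (A ^ m) i l * x l)
          (fun l _ => mul_nonneg (pow_entry_nonneg hA m i l) (hxpos l).le) (Finset.mem_univ i)
      rw [h1] at h2
      have h3 : (ρ ^ m • x) i = 0 := by
        rw [← h]
        simp [zero_pow hm0.ne']
      rw [h3] at h2
      nlinarith [mul_pos hmpos (hxpos i)]
    · exact h
  have hjk : j ≠ k := fun h => absurd hxjk (by rw [h]; exact lt_irrefl _)
  set δ := A i k - A i j with hδdef
  have hδ : 0 < δ := by rw [hδdef]; linarith
  set B := A.updateRow i (fun l => A i (Equiv.swap j k l)) with hBdef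
  have hBOm : B ∈ Omega A := by
    intro l
    by_cases hl : l = i
    · exact ⟨Equiv.swap j k, fun m => by rw [hl, hBdef, Matrix.updateRow_self]⟩
    · exact ⟨1, fun m => by rw [hBdef, Matrix.updateRow_ne hl]; rfl⟩
  set N := ρ • (1 : Matrix (Fin n) (Fin n) ℝ) - A with hNdef
  have hNmul : ∀ v : Fin n → ℝ, N.mulVec v = ρ • v - A.mulVec v := by
    intro v
    rw [hNdef, Matrix.sub_mulVec, Matrix.smul_mulVec, Matrix.one_mulVec]
  have hdetN : N.det = 0 := by
    apply (Matrix.exists_mulVec_eq_zero_iff).mp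
    exact ⟨x, hxne, by rw [hNmul, heig, sub_self]⟩
  set M₀ := A.updateRow i 0 with hM₀def
  have hkey : ∀ t : ℝ, ρ ≤ t → (t • (1 : Matrix (Fin n) (Fin n) ℝ) - M₀).det ≠ 0 := by
    intro t ht hdet
    obtain ⟨v, hv0, hveq⟩ := (Matrix.exists_mulVec_eq_zero_iff).mpr hdet
    have heq : M₀.mulVec v = t • v := by
      rw [Matrix.sub_mulVec, Matrix.smul_mulVec, Matrix.one_mulVec] at hveq
      exact (sub_eq_zero.mp hveq).symm
    exact hv0 (no_eigen_ge hA hirr hxpos hρ heig i ht heq)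
  have hdetM₀pos : 0 < (ρ • (1 : Matrix (Fin n) (Fin n) ℝ) - M₀).det := by
    obtain ⟨T, hρT, hTpos⟩ := exists_det_pos M₀ ρ
    rcases lt_trichotomy ((ρ • (1 : Matrix (Fin n) (Fin n) ℝ) - M₀).det) 0 with h | h | h
    · exfalso
      obtain ⟨t, ht, hft⟩ := intermediate_value_Ioo hρT.le (continuous_detfun M₀).continuousOn
        ⟨h, hTpos⟩
      exact hkey t ht.1.le hft
    · exact absurd h (hkey ρ le_rfl)
    · exact h
  have hrow0 : ρ • (1 : Matrix (Fin n) (Fin n) ℝ) - M₀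
      = N.updateRow i (ρ • (Pi.single i 1 : Fin n → ℝ)) := by
    ext l m
    by_cases hl : l = i
    · subst hl
      rw [Matrix.updateRow_self]
      simp [hM₀def, Matrix.updateRow_self, Matrix.one_apply, Pi.single_apply, eq_comm]
    · rw [Matrix.updateRow_ne hl]
      simp [hNdef, hM₀def, Matrix.updateRow_ne hl]
  have hdetid : (ρ • (1 : Matrix (Fin n) (Fin n) ℝ) - M₀).det = ρ * adjugate N i i := by
    rw [hrow0, Matrix.det_updateRow_smul, ← Matrix.adjugate_apply]
  have hadjii : 0 < adjugate N i i := by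
    have h := hdetM₀pos
    rw [hdetid] at h
    rcases mul_pos_iff.mp h with ⟨_, h2⟩ | ⟨h1, _⟩
    · exact h2
    · linarith
  set vc : Fin n → ℝ := fun l => adjugate N l i with hvcdef
  have hvceig : A.mulVec vc = ρ • vc := by
    have hz : ∀ l, N.mulVec vc l = 0 := by
      intro l
      rw [mulVec_apply']
      have he : ∑ m, N l m * vc m = (N * adjugate N) l i := by
        rw [Matrix.mul_apply]
      rw [he, Matrix.mul_adjugate, hdetN]
      simp
    have hz2 : N.mulVec vc = 0 := funext hz
    rw [hNmul] at hz2
    exact (sub_eq_zero.mp hz2).symm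
  obtain ⟨s, hvc⟩ := eig_unique hA hirr hxpos heig hn hvceig
  have hsval : ∀ l, adjugate N l i = s * x l := by
    intro l
    have := congrFun hvc l
    simpa [hvcdef] using this
  have hspos : 0 < s := by
    have h1 := hsval i
    nlinarith [hadjii, hxpos i]
  have hrowB : ρ • (1 : Matrix (Fin n) (Fin n) ℝ) - B
      = N.updateRow i (N i + ((-δ) • (Pi.single j 1 : Fin n → ℝ) + δ • (Pi.single k 1 : Fin n → ℝ))) := by
    ext l m
    by_cases hl : l = i
    · subst hl
      rw [Matrix.updateRow_self]
      by_cases hmj : m = j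
      · subst hmj
        simp [hBdef, Matrix.updateRow_self, Equiv.swap_apply_left, hNdef, hδdef,
          Pi.single_apply, hjk, Ne.symm hjk]
      · by_cases hmk : m = k
        · subst hmk
          simp [hBdef, Matrix.updateRow_self, Equiv.swap_apply_right, hNdef, hδdef,
            Pi.single_apply, hjk, Ne.symm hjk]
        · simp [hBdef, Matrix.updateRow_self, Equiv.swap_apply_of_ne_of_ne hmj hmk,
            hNdef, Pi.single_apply, hmj, hmk]
    · rw [Matrix.updateRow_ne hl]
      simp [hNdef, hBdef, Matrix.updateRow_ne hl]
  have hdetB : (ρ • (1 : Matrix (Fin n) (Fin n) ℝ) - B).det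
      = (-δ) * (s * x j) + δ * (s * x k) := by
    rw [hrowB, Matrix.det_updateRow_add, Matrix.updateRow_eq_self, hdetN,
      Matrix.det_updateRow_add, Matrix.det_updateRow_smul, Matrix.det_updateRow_smul,
      ← Matrix.adjugate_apply, ← Matrix.adjugate_apply, hsval j, hsval k]
    ring
  have hdetBneg : (ρ • (1 : Matrix (Fin n) (Fin n) ℝ) - B).det < 0 := by
    rw [hdetB]
    nlinarith [mul_pos (mul_pos hδ hspos) (sub_pos.mpr hxjk)]
  obtain ⟨T, hρT, hTpos⟩ := exists_det_pos B ρ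
  obtain ⟨t, ht, hft⟩ := intermediate_value_Ioo hρT.le (continuous_detfun B).continuousOn
    ⟨hdetBneg, hTpos⟩
  obtain ⟨v, hv0, hveq0⟩ := (Matrix.exists_mulVec_eq_zero_iff).mpr hft
  have hveq : B.mulVec v = t • v := by
    rw [Matrix.sub_mulVec, Matrix.smul_mulVec, Matrix.one_mulVec] at hveq0
    exact (sub_eq_zero.mp hveq0).symm
  have hNE : Nonempty (Fin n) := ⟨i⟩
  set R : ℝ := Finset.univ.sup' Finset.univ_nonempty (fun l => ∑ m, A l m) with hRdef
  have hRrow : ∀ l, (∑ m, A l m) ≤ R := by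
    intro l
    rw [hRdef]
    exact Finset.le_sup' (fun l => ∑ m, A l m) (Finset.mem_univ l)
  have hR0 : 0 ≤ R := le_trans (Finset.sum_nonneg fun m _ => hA i m) (hRrow i)
  have hbound : ∀ B' ∈ Omega A, ∀ r : ℝ,
      (0 ≤ r ∧ ∃ u : Fin n → ℝ, u ≠ 0 ∧ B'.mulVec u = r • u) → r ≤ R := by
    rintro B' hB' r ⟨hr0, u, hu0, hueq⟩
    obtain ⟨a, -, ha⟩ := Finset.exists_max_image Finset.univ (fun l => |u l|)
      ⟨i, Finset.mem_univ _⟩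
    have hua : 0 < |u a| := by
      obtain ⟨b, hb⟩ := Function.ne_iff.mp hu0
      exact lt_of_lt_of_le (abs_pos.mpr hb) (ha b (Finset.mem_univ b))
    obtain ⟨φ, hφ⟩ := hB' a
    have hB'nn : ∀ m, 0 ≤ B' a m := fun m => (hφ m) ▸ hA a (φ m)
    have e1 : r * |u a| = |B'.mulVec u a| := by
      rw [hueq]
      show r * |u a| = |(r • u) a|
      rw [Pi.smul_apply, smul_eq_mul, abs_mul, abs_of_nonneg hr0]
    have h1 : r * |u a| ≤ (∑ m, B' a m) * |u a| := by
      calc r * |u a| = |B'.mulVec u a| := e1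
        _ ≤ ∑ m, B' a m * |u m| := by
            rw [mulVec_apply']
            refine (Finset.abs_sum_le_sum_abs _ _).trans (le_of_eq ?_)
            exact Finset.sum_congr rfl fun m _ => by
              rw [abs_mul, abs_of_nonneg (hB'nn m)]
        _ ≤ ∑ m, B' a m * |u a| :=
            Finset.sum_le_sum fun m _ =>
              mul_le_mul_of_nonneg_left (ha m (Finset.mem_univ m)) (hB'nn m)
        _ = (∑ m, B' a m) * |u a| := by rw [Finset.sum_mul]
    have h2 : ∑ m, B' a m = ∑ m, A a m := by
      calc ∑ m, B' a m = ∑ m, A a (φ m) := Finset.sum_congr rfl fun m _ => hφ m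
        _ = ∑ m, A a m := Equiv.sum_comp φ _
    have h3 := (mul_le_mul_iff_of_pos_right hua).mp h1
    calc r ≤ ∑ m, B' a m := h3
      _ = ∑ m, A a m := h2
      _ ≤ R := hRrow a
  have hSB_bdd : BddAbove {r : ℝ | 0 ≤ r ∧ ∃ u : Fin n → ℝ, u ≠ 0 ∧ B.mulVec u = r • u} :=
    ⟨R, fun r hr => hbound B hBOm r hr⟩
  have htmem : t ∈ {r : ℝ | 0 ≤ r ∧ ∃ u : Fin n → ℝ, u ≠ 0 ∧ B.mulVec u = r • u} :=
    ⟨(hρ.trans ht.1).le, v, hv0, hveq⟩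
  have h5 : t ≤ perronRoot B := by
    unfold perronRoot
    exact le_csSup hSB_bdd htmem
  have himg : ∀ y ∈ perronRoot '' Omega A, y ≤ R := by
    rintro y ⟨B', hB', rfl⟩
    unfold perronRoot
    exact Real.sSup_le (fun r hr => hbound B' hB' r hr) hR0
  have h6 : perronRoot B ≤ sSup (perronRoot '' Omega A) :=
    le_csSup ⟨R, fun y hy => himg y hy⟩ ⟨B, hBOm, rfl⟩
  have hcontra : ρ < ρ := by
    calc ρ < t := ht.1
      _ ≤ perronRoot B := h5
      _ ≤ sSup (perronRoot '' Omega A) := h6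
      _ = ρ := hmax.symm
  exact lt_irrefl _ hcontra
end

section
/- Let A be a nonnegative n×n matrix with Perron eigenvector x, ∑ᵢ xᵢ = 1, and suppose either (for all i,j,k: x_k < x_j implies a_{i,k} ≤ a_{i,j}) or (for all i,j,k: x_k < x_j implies a_{i,k} ≥ a_{i,j}). Then the equalities (1/n)∑_j a_{i,j} = ρ(A)·x_i for all i hold if and only if either x_i = 1/n for all i, or every row of A is constant (for each i there is c_i with a_{i,j} = c_i for all j). -/
/-!
Since `x` sums to one and `A x = ρ x`, the `i`-th equality says `n ∑ⱼ aᵢⱼ xⱼ = (∑ⱼ aᵢⱼ)(∑ⱼ xⱼ)`,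
i.e. equality in Chebyshev's sum inequality for the row `aᵢ` and `x`, which are similarly
(or oppositely) ordered. By the identity
`∑ⱼ∑ₖ (aᵢₖ - aᵢⱼ)(xₖ - xⱼ) = 2 (n ∑ⱼ aᵢⱼ xⱼ - (∑ⱼ aᵢⱼ)(∑ⱼ xⱼ))`, whose summands all have the
same sign, equality holds iff `(aᵢₖ - aᵢⱼ)(xₖ - xⱼ) = 0` for all `j, k`. If `x` is not constant,
some pair `xₚ ≠ x_q` forces every row of `A` to be constant.
-/

open Matrix Finset

section Chebyshev

variable {ι : Type*} [Fintype ι]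

lemma sum_sum_sub_mul_sub {α : Type*} [CommRing α] (f g : ι → α) :
    ∑ i, ∑ j, (f j - f i) * (g j - g i) =
      2 * (Fintype.card ι * ∑ i, f i * g i - (∑ i, f i) * ∑ i, g i) := by
  simp only [sub_mul, mul_sub, sum_sub_distrib, sum_const, card_univ, nsmul_eq_mul,
    ← mul_sum, ← sum_mul]
  ring

variable {α : Type*} [CommRing α] [LinearOrder α] [IsStrictOrderedRing α] {f g : ι → α}

lemma sum_sum_sub_mul_sub_eq_zero_iff (hfg : Monovary f g ∨ Antivary f g) :
    ∑ i, ∑ j, (f j - f i) * (g j - g i) = 0 ↔ ∀ i j, (f j - f i) * (g j - g i) = 0 := by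
  rw [← Fintype.sum_prod_type' (fun i j => (f j - f i) * (g j - g i))]
  rcases hfg with hfg | hfg
  · rw [Fintype.sum_eq_zero_iff_of_nonneg fun p : ι × ι => hfg.sub_mul_sub_nonneg p.1 p.2]
    simp [funext_iff]
  · rw [Fintype.sum_eq_zero_iff_of_nonpos fun p : ι × ι => hfg.sub_mul_sub_nonpos p.1 p.2]
    simp [funext_iff]

lemma card_mul_sum_mul_eq_sum_mul_sum_iff (hfg : Monovary f g ∨ Antivary f g) :
    Fintype.card ι * ∑ i, f i * g i = (∑ i, f i) * ∑ i, g i ↔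
      ∀ i j, (f j - f i) * (g j - g i) = 0 := by
  rw [← sum_sum_sub_mul_sub_eq_zero_iff hfg, sum_sum_sub_mul_sub, mul_eq_zero, sub_eq_zero]
  simp

end Chebyshev

lemma forall_sub_mul_sub_eq_zero_iff {κ ι α : Type*} [Ring α] [NoZeroDivisors α]
    (f : κ → ι → α) (g : ι → α) :
    (∀ k i j, (f k j - f k i) * (g j - g i) = 0) ↔
      (∀ i j, g i = g j) ∨ ∀ k i j, f k i = f k j := by
  constructor
  · intro h
    by_contra! hne
    obtain ⟨⟨p, q, hpq⟩, k, i, j, hij⟩ := hne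
    have hf : ∀ i j, g i ≠ g j → f k i = f k j := fun i j hg =>
      (sub_eq_zero.mp ((mul_eq_zero.mp (h k i j)).resolve_right (sub_ne_zero.mpr hg.symm))).symm
    have hfp : ∀ i, f k i = f k p := fun i => by
      by_cases hip : g i = g p
      · rw [hf i q (hip ▸ hpq), hf p q hpq]
      · exact hf i p hip
    exact hij ((hfp i).trans (hfp j).symm)
  · rintro (hg | hf) k i j
    · rw [hg j i, sub_self, mul_zero]
    · rw [hf k j i, sub_self, zero_mul]

lemma forall_eq_iff_forall_eq_one_div_card {ι K : Type*} [Fintype ι] [Field K] {x : ι → K}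
    (hsum : ∑ i, x i = 1) : (∀ i j, x i = x j) ↔ ∀ i, x i = 1 / Fintype.card ι := by
  constructor
  · intro h i
    have : Fintype.card ι * x i = 1 := by
      rw [← hsum, ← nsmul_eq_mul, ← card_univ, ← sum_const]
      exact sum_congr rfl fun j _ => h i j
    exact eq_one_div_of_mul_eq_one_right this
  · intro h i j
    rw [h i, h j]

theorem stmt9_general {n : ℕ} (A : Matrix (Fin n) (Fin n) ℝ)
    (x : Fin n → ℝ) (heig : A.mulVec x = perronRoot A • x)
    (hsum : ∑ i, x i = 1)
    (hmono : (∀ i j k, x k < x j → A i k ≤ A i j) ∨ (∀ i j k, x k < x j → A i j ≤ A i k)) :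
    (∀ i, (∑ j, A i j) / n = perronRoot A * x i) ↔
      ((∀ i, x i = 1 / n) ∨ (∀ i, ∃ c, ∀ j, A i j = c)) := by
  have hn : (n : ℝ) ≠ 0 := Nat.cast_ne_zero.mpr (by rintro rfl; simp at hsum)
  have hrow (i : Fin n) : (∑ j, A i j) / n = perronRoot A * x i ↔
      ∀ j k, (A i k - A i j) * (x k - x j) = 0 := by
    have hvary : Monovary (A i) x ∨ Antivary (A i) x :=
      hmono.imp (fun h _ _ hx => h i _ _ hx) (fun h _ _ hx => h i _ _ hx)
    have hAx : ∑ j, A i j * x j = perronRoot A * x i := congrFun heig i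
    rw [← card_mul_sum_mul_eq_sum_mul_sum_iff hvary, hAx, hsum, Fintype.card_fin, mul_one,
      div_eq_iff hn, mul_comm _ (n : ℝ), eq_comm]
  have hconst (i : Fin n) : (∃ c, ∀ j, A i j = c) ↔ ∀ j k, A i j = A i k :=
    ⟨fun ⟨c, hc⟩ j k => (hc j).trans (hc k).symm, fun h => ⟨A i i, fun j => h j i⟩⟩
  have hx : (∀ i j, x i = x j) ↔ ∀ i, x i = 1 / n := by
    simpa using forall_eq_iff_forall_eq_one_div_card hsum
  rw [forall_congr' hrow, forall_congr' hconst, ← hx]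
  exact forall_sub_mul_sub_eq_zero_iff A x

theorem stmt9 {n : ℕ} (hn : 0 < n) (A : Matrix (Fin n) (Fin n) ℝ) (hA : ∀ i j, 0 ≤ A i j)
    (x : Fin n → ℝ) (hx : ∀ i, 0 ≤ x i) (heig : A.mulVec x = perronRoot A • x)
    (hsum : ∑ i, x i = 1)
    (hmono : (∀ i j k, x k < x j → A i k ≤ A i j) ∨ (∀ i j k, x k < x j → A i j ≤ A i k)) :
    (∀ i, (∑ j, A i j) / n = perronRoot A * x i) ↔
      ((∀ i, x i = 1 / n) ∨ (∀ i, ∃ c, ∀ j, A i j = c)) :=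
  stmt9_general A x heig hsum hmono
end

section
/- For a strictly positive n×n matrix A: (1/n)·∑ᵢ∑ⱼ a_{i,j} = max over B ∈ Ω(A) of ρ(B) holds if and only if either the all-ones vector is a Perron eigenvector of A (all row sums equal), or every row of A is constant. -/
/-!
Let `w` be the vector of row sums of `A` and `T = ∑ᵢ wᵢ`. Sorting every row of `A` into the
order of `w` gives `B ∈ Ω(A)` whose rows vary together with `w`, so Chebyshev's sum inequality
gives `(T / n) • w ≤ B w`, strictly in a non-constant row when `w` is not constant. For a positive
matrix a strictly subinvariant vector forces an eigenvalue above `T / n`: maximising `t` over the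
compact set of pairs `(t, x)` with `x` in the simplex and `t • x ≤ B x` (Collatz–Wielandt) yields
an eigenvector, since applying `B` once to a non-eigenvector strictly improves `t`.
Conversely, a common row sum `r` is shared by all of `Ω(A)` and is then the Perron root of each
member, and constant rows make `Ω(A) = {A}` with `A = c 𝟙ᵀ` of rank one, `ρ(A) = ∑ᵢ cᵢ`.
-/

open Matrix Finset

theorem Matrix.exists_abs_le_sum_abs_of_mulVec_eq_smul {ι : Type*} [Fintype ι] [DecidableEq ι]
    {B : Matrix ι ι ℝ} {s : ℝ} {v : ι → ℝ} (hv : v ≠ 0) (he : B *ᵥ v = s • v) :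
    ∃ k, |s| ≤ ∑ j, |B k j| := by
  have hs : Module.End.HasEigenvalue (toLin' B) s :=
    Module.End.hasEigenvalue_of_hasEigenvector
      ⟨Module.End.mem_eigenspace_iff.2 (by simpa using he), hv⟩
  obtain ⟨k, hk⟩ := eigenvalue_mem_ball hs
  refine ⟨k, ?_⟩
  rw [Metric.mem_closedBall, Real.dist_eq] at hk
  simp only [Real.norm_eq_abs] at hk
  rw [← Finset.add_sum_erase _ _ (Finset.mem_univ k)]
  calc |s| ≤ |B k k| + |s - B k k| := by
        simpa using abs_add_le (B k k) (s - B k k)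
    _ ≤ _ := by gcongr

section PerronRoot

variable {n : ℕ}

theorem le_perronRoot {B : Matrix (Fin n) (Fin n) ℝ} {s : ℝ} {v : Fin n → ℝ} (hs : 0 ≤ s)
    (hv : v ≠ 0) (he : B *ᵥ v = s • v) : s ≤ perronRoot B := by
  refine le_csSup ⟨∑ i, ∑ j, |B i j|, ?_⟩ ⟨hs, v, hv, he⟩
  rintro r ⟨-, w, hw, hrw⟩
  obtain ⟨k, hk⟩ := exists_abs_le_sum_abs_of_mulVec_eq_smul hw hrw
  exact (le_abs_self r).trans <| hk.trans <|
    Finset.single_le_sum (fun i _ => Finset.sum_nonneg fun j _ => abs_nonneg (B i j)) (mem_univ k)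

theorem perronRoot_le {B : Matrix (Fin n) (Fin n) ℝ} {K : ℝ} (hK : ∀ i, ∑ j, |B i j| ≤ K)
    (hK₀ : 0 ≤ K) : perronRoot B ≤ K := by
  refine Real.sSup_le ?_ hK₀
  rintro r ⟨-, v, hv, he⟩
  obtain ⟨k, hk⟩ := exists_abs_le_sum_abs_of_mulVec_eq_smul hv he
  exact (le_abs_self r).trans (hk.trans (hK k))

theorem perronRoot_eq_of_sum_row_eq (hn : 0 < n) {B : Matrix (Fin n) (Fin n) ℝ}
    (hB : ∀ i j, 0 ≤ B i j) {r : ℝ} (h : ∀ i, ∑ j, B i j = r) : perronRoot B = r := by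
  have hr : 0 ≤ r := h ⟨0, hn⟩ ▸ Finset.sum_nonneg fun j _ => hB _ j
  refine le_antisymm (perronRoot_le (fun i => ?_) hr) (le_perronRoot (v := 1) hr ?_ ?_)
  · simp only [abs_of_nonneg (hB i _), h i, le_refl]
  · exact Function.ne_iff.2 ⟨⟨0, hn⟩, one_ne_zero⟩
  · ext i
    simp [mulVec, dotProduct, h i]

theorem perronRoot_vecMulVec {c u : Fin n → ℝ} (hc : c ≠ 0) (h : 0 ≤ u ⬝ᵥ c) :
    perronRoot (vecMulVec c u) = u ⬝ᵥ c := by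
  refine le_antisymm (Real.sSup_le ?_ h) (le_perronRoot h hc ?_)
  · rintro s ⟨hs, v, hv, he⟩
    rw [vecMulVec_mulVec, op_smul_eq_smul] at he
    rcases hs.eq_or_lt with rfl | hs
    · exact h
    have huv : u ⬝ᵥ v ≠ 0 := by
      rintro huv
      rw [huv, zero_smul, eq_comm, smul_eq_zero] at he
      exact he.elim hs.ne' hv
    have := congrArg (u ⬝ᵥ ·) he
    simp only [dotProduct_smul, smul_eq_mul] at this
    exact (mul_right_cancel₀ huv (by linarith)).le
  · rw [vecMulVec_mulVec]; ext; simp [mul_comm]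

end PerronRoot

section CollatzWielandt

variable {ι : Type*} [Fintype ι] (C : Matrix ι ι ℝ)

def collatzWielandtSet : Set (ℝ × (ι → ℝ)) :=
  {p | 0 ≤ p.1 ∧ 0 ≤ p.2 ∧ ∑ i, p.2 i = 1 ∧ p.1 • p.2 ≤ C *ᵥ p.2}

theorem isCompact_collatzWielandtSet : IsCompact (collatzWielandtSet C) := by
  have hclosed : IsClosed (collatzWielandtSet C) := by
    simp only [collatzWielandtSet, Set.ofPred_and]
    refine (isClosed_le ?_ ?_).inter <| (isClosed_le ?_ ?_).inter <|
      (isClosed_eq ?_ ?_).inter (isClosed_le ?_ ?_) <;> fun_prop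
  refine (isCompact_Icc (a := (0, 0)) (b := (∑ i, ∑ j, |C i j|, 1))).of_isClosed_subset
    hclosed ?_
  rintro ⟨t, x⟩ ⟨ht, hx, hsum, hle⟩
  have hx1 : x ≤ 1 := fun i =>
    (Finset.single_le_sum (fun j _ => hx j) (mem_univ i)).trans_eq hsum
  refine ⟨⟨ht, hx⟩, ⟨?_, hx1⟩⟩
  calc t = ∑ i, t * x i := by rw [← Finset.mul_sum, hsum, mul_one]
    _ ≤ ∑ i, (C *ᵥ x) i := Finset.sum_le_sum fun i _ => hle i
    _ ≤ ∑ i, ∑ j, |C i j| := by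
        refine Finset.sum_le_sum fun i _ => ?_
        simp only [mulVec, dotProduct]
        refine Finset.sum_le_sum fun j _ => ?_
        calc C i j * x j ≤ |C i j * x j| := le_abs_self _
          _ ≤ |C i j| := by
            rw [abs_mul, abs_of_nonneg (hx j)]
            exact mul_le_of_le_one_right (abs_nonneg _) (hx1 j)

variable {C}

theorem mulVec_pos (hC : ∀ i j, 0 < C i j) {x : ι → ℝ} (hx : 0 ≤ x) (hx₀ : x ≠ 0)
    (i : ι) : 0 < (C *ᵥ x) i := by
  obtain ⟨j, hj⟩ := Function.ne_iff.1 hx₀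
  exact Finset.sum_pos' (fun k _ => mul_nonneg (hC i k).le (hx k))
    ⟨j, mem_univ j, mul_pos (hC i j) ((hx j).lt_of_ne' hj)⟩

open Filter Topology in
theorem exists_gt_mem_collatzWielandtSet (hC : ∀ i j, 0 < C i j) {t : ℝ} {x : ι → ℝ}
    (ht : 0 ≤ t) (hx : 0 ≤ x) (hle : t • x ≤ C *ᵥ x) (hne : t • x ≠ C *ᵥ x) :
    ∃ p ∈ collatzWielandtSet C, t < p.1 := by
  have hx₀ : x ≠ 0 := by rintro rfl; simp at hne
  obtain ⟨i₀, -⟩ := Function.ne_iff.1 hx₀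
  set z := C *ᵥ x
  have hz : ∀ i, 0 < z i := mulVec_pos hC hx hx₀
  have hCz : ∀ i, t * z i < (C *ᵥ z) i := by
    intro i
    have := mulVec_pos hC (sub_nonneg.2 hle) (sub_ne_zero.2 hne.symm) i
    rwa [mulVec_sub, mulVec_smul, Pi.sub_apply, Pi.smul_apply, smul_eq_mul, sub_pos] at this
  obtain ⟨s, hts, hs⟩ : ∃ s, t < s ∧ ∀ i, s * z i < (C *ᵥ z) i := by
    have : ∀ᶠ s in 𝓝 t, ∀ i, s * z i < (C *ᵥ z) i :=
      eventually_all.2 fun i => (continuous_id.mul continuous_const).continuousAt.eventually_lt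
        continuousAt_const (hCz i)
    exact ((this.filter_mono (nhdsWithin_le_nhds (s := Set.Ioi t))).and
      self_mem_nhdsWithin).exists.imp fun s h => ⟨h.2, h.1⟩
  have hzsum : 0 < ∑ i, z i := Finset.sum_pos (fun i _ => hz i) ⟨i₀, mem_univ i₀⟩
  refine ⟨(s, (∑ i, z i)⁻¹ • z), ⟨ht.trans hts.le, ?_, ?_, ?_⟩, hts⟩
  · exact smul_nonneg (inv_nonneg.2 hzsum.le) fun i => (hz i).le
  · simp only [Pi.smul_apply, smul_eq_mul, ← Finset.mul_sum, inv_mul_cancel₀ hzsum.ne']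
  · rw [mulVec_smul, smul_comm]
    exact smul_le_smul_of_nonneg_left (fun i => (hs i).le) (inv_nonneg.2 hzsum.le)

theorem exists_eigenvalue_gt_of_le_mulVec (hC : ∀ i j, 0 < C i j) {t : ℝ} {x : ι → ℝ}
    (ht : 0 ≤ t) (hx : 0 ≤ x) (hle : t • x ≤ C *ᵥ x) (hne : t • x ≠ C *ᵥ x) :
    ∃ r, t < r ∧ ∃ v ≠ 0, C *ᵥ v = r • v := by
  obtain ⟨p, hp, htp⟩ := exists_gt_mem_collatzWielandtSet hC ht hx hle hne
  obtain ⟨⟨r, v⟩, ⟨hr, hv, hsum, hrv⟩, hmax⟩ :=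
    (isCompact_collatzWielandtSet C).exists_isMaxOn ⟨p, hp⟩ continuous_fst.continuousOn
  refine ⟨r, htp.trans_le (hmax hp), v, ?_, ?_⟩
  · rintro rfl; simp at hsum
  · by_contra hne'
    obtain ⟨q, hq, hrq⟩ := exists_gt_mem_collatzWielandtSet hC hr hv hrv (Ne.symm hne')
    exact (hmax hq).not_gt hrq

end CollatzWielandt

theorem Monovary.sum_mul_sum_lt_card_mul_sum {ι : Type*} [Fintype ι] {f g : ι → ℝ}
    (hfg : Monovary f g) (h : ∃ j k, f j < f k ∧ g j < g k) :
    (∑ i, f i) * ∑ i, g i < Fintype.card ι * ∑ i, f i * g i := by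
  obtain ⟨j, k, hf, hg⟩ := h
  have hpos : 0 < ∑ a, ∑ b, (f a - f b) * (g a - g b) :=
    Finset.sum_pos' (fun a _ => Finset.sum_nonneg fun b _ => hfg.sub_mul_sub_nonneg b a)
      ⟨j, mem_univ j, Finset.sum_pos' (fun b _ => hfg.sub_mul_sub_nonneg b j)
        ⟨k, mem_univ k, mul_pos_of_neg_of_neg (sub_neg.2 hf) (sub_neg.2 hg)⟩⟩
  have hid : ∑ a, ∑ b, (f a - f b) * (g a - g b) =
      2 * (Fintype.card ι * ∑ i, f i * g i - (∑ i, f i) * ∑ i, g i) := by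
    simp only [sub_mul, mul_sub, Finset.sum_sub_distrib, ← Finset.mul_sum, ← Finset.sum_mul,
      Finset.sum_const, card_univ, nsmul_eq_mul]
    simp only [mul_left_comm _ (Fintype.card ι : ℝ), ← Finset.mul_sum]
    ring
  linarith

theorem Monotone.exists_lt_and_lt {ι α β : Type*} [LinearOrder ι] [LinearOrder α]
    [LinearOrder β] {f : ι → α} {g : ι → β} (hf : Monotone f) (hg : Monotone g)
    (hf' : ∃ a b, f a ≠ f b) (hg' : ∃ c d, g c ≠ g d) :
    ∃ j k, f j < f k ∧ g j < g k := by
  obtain ⟨a, b, hab⟩ : ∃ a b, f a < f b := by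
    obtain ⟨a, b, hab⟩ := hf'
    exact hab.lt_or_gt.elim (fun h => ⟨a, b, h⟩) fun h => ⟨b, a, h⟩
  obtain ⟨c, d, hcd⟩ : ∃ c d, g c < g d := by
    obtain ⟨c, d, hcd⟩ := hg'
    exact hcd.lt_or_gt.elim (fun h => ⟨c, d, h⟩) fun h => ⟨d, c, h⟩
  exact ⟨min a c, max b d, (hf (min_le_left _ _)).trans_lt (hab.trans_le (hf (le_max_left _ _))),
    (hg (min_le_right _ _)).trans_lt (hcd.trans_le (hg (le_max_right _ _)))⟩

section Omega

variable {n : ℕ} {A B : Matrix (Fin n) (Fin n) ℝ}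

theorem self_mem_Omega (A : Matrix (Fin n) (Fin n) ℝ) : A ∈ Omega A :=
  fun _ => ⟨1, fun _ => rfl⟩

theorem pos_of_mem_Omega (hA : ∀ i j, 0 < A i j) (hB : B ∈ Omega A) (i j : Fin n) :
    0 < B i j := by
  obtain ⟨φ, hφ⟩ := hB i
  exact hφ j ▸ hA i (φ j)

theorem sum_comp_row_of_mem_Omega {β : Type*} [AddCommMonoid β] (hB : B ∈ Omega A)
    (f : ℝ → β) (i : Fin n) : ∑ j, f (B i j) = ∑ j, f (A i j) := by
  obtain ⟨φ, hφ⟩ := hB i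
  simp only [hφ]
  exact Equiv.sum_comp φ (fun j => f (A i j))

theorem Omega_eq_singleton_of_row_const (h : ∀ i, ∃ c, ∀ j, A i j = c) : Omega A = {A} := by
  refine Set.eq_singleton_iff_unique_mem.2 ⟨self_mem_Omega A, fun B hB => ?_⟩
  ext i j
  obtain ⟨φ, hφ⟩ := hB i
  obtain ⟨c, hc⟩ := h i
  rw [hφ, hc, hc]

theorem exists_perm_mem_Omega_monotone_comp (A : Matrix (Fin n) (Fin n) ℝ) (w : Fin n → ℝ) :
    ∃ σ : Equiv.Perm (Fin n), ∃ B ∈ Omega A,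
      Monotone (w ∘ σ) ∧ ∀ i, Monotone (B i ∘ σ) := by
  refine ⟨Tuple.sort w, of fun i j => A i (Tuple.sort (A i) ((Tuple.sort w).symm j)),
    fun i => ⟨(Tuple.sort w).symm.trans (Tuple.sort (A i)), fun j => rfl⟩,
    Tuple.monotone_sort w, fun i => ?_⟩
  simpa [Function.comp_def] using Tuple.monotone_sort (A i)

theorem bddAbove_perronRoot_image_Omega (A : Matrix (Fin n) (Fin n) ℝ) :
    BddAbove (perronRoot '' Omega A) := by
  refine ⟨∑ i, ∑ j, |A i j|,
    Set.forall_mem_image.2 fun B hB => perronRoot_le (fun i => ?_) ?_⟩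
  · exact (sum_comp_row_of_mem_Omega hB abs i).trans_le <|
      Finset.single_le_sum (fun k _ => Finset.sum_nonneg fun j _ => abs_nonneg (A k j)) (mem_univ i)
  · exact Finset.sum_nonneg fun i _ => Finset.sum_nonneg fun j _ => abs_nonneg (A i j)

theorem perronRoot_image_Omega_of_sum_row_eq (hn : 0 < n) (hA : ∀ i j, 0 < A i j) {r : ℝ}
    (h : ∀ i, ∑ j, A i j = r) : perronRoot '' Omega A = {r} := by
  refine (Set.image_congr fun B hB => ?_).trans
    (Set.Nonempty.image_const ⟨A, self_mem_Omega A⟩ r)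
  exact perronRoot_eq_of_sum_row_eq hn (fun i j => (pos_of_mem_Omega hA hB i j).le)
    fun i => (sum_comp_row_of_mem_Omega hB id i).trans (h i)

theorem perronRoot_image_Omega_of_row_const {c : Fin n → ℝ} (hc : ∀ i j, A i j = c i)
    (hc₀ : 0 ≤ c) (hc₁ : c ≠ 0) : perronRoot '' Omega A = {∑ i, c i} := by
  have hA : A = vecMulVec c 1 := by ext i j; simp [vecMulVec, hc]
  rw [Omega_eq_singleton_of_row_const fun i => ⟨c i, hc i⟩, Set.image_singleton, hA,
    perronRoot_vecMulVec hc₁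
      (by simpa [one_dotProduct] using Finset.sum_nonneg fun i _ => hc₀ i),
    one_dotProduct]

theorem exists_ne_row_of_mem_Omega (hB : B ∈ Omega A) {i : Fin n}
    (h : ∃ j j', A i j ≠ A i j') : ∃ j j', B i j ≠ B i j' := by
  obtain ⟨φ, hφ⟩ := hB i
  obtain ⟨j, j', hjj'⟩ := h
  exact ⟨φ.symm j, φ.symm j', by simpa [hφ] using hjj'⟩

theorem exists_mem_Omega_smul_le_mulVec (A : Matrix (Fin n) (Fin n) ℝ)
    (hrow : ∃ i j j', A i j ≠ A i j') (hw : ∃ a b, ∑ j, A a j ≠ ∑ j, A b j) :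
    ∃ B ∈ Omega A,
      ((∑ i, ∑ j, A i j) / n) • (fun i => ∑ j, A i j) ≤
        B *ᵥ (fun i => ∑ j, A i j) ∧
      ((∑ i, ∑ j, A i j) / n) • (fun i => ∑ j, A i j) ≠
        B *ᵥ (fun i => ∑ j, A i j) := by
  set w : Fin n → ℝ := fun i => ∑ j, A i j
  obtain ⟨i₀, hi₀⟩ := hrow
  have hn : (0 : ℝ) < n := Nat.cast_pos.2 i₀.pos
  obtain ⟨σ, B, hB, hwσ, hBσ⟩ := exists_perm_mem_Omega_monotone_comp A w
  have hmono : ∀ i, Monovary (B i) w := fun i => by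
    simpa [Function.comp_def] using ((hBσ i).monovary hwσ).comp_right σ.symm
  have hsum : ∀ i, ∑ j, B i j = w i := sum_comp_row_of_mem_Omega hB id
  have hle : ∀ i, w i * ∑ j, w j ≤ n * (B *ᵥ w) i := fun i => by
    simpa [hsum, mulVec, dotProduct] using (hmono i).sum_mul_sum_le_card_mul_sum
  have hlt : w i₀ * ∑ j, w j < n * (B *ᵥ w) i₀ := by
    obtain ⟨j, k, hBjk, hwjk⟩ := (hBσ i₀).exists_lt_and_lt hwσ
      (by
        obtain ⟨j, j', h⟩ := exists_ne_row_of_mem_Omega hB hi₀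
        exact ⟨σ.symm j, σ.symm j', by simpa using h⟩)
      (by
        obtain ⟨a, b, h⟩ := hw
        exact ⟨σ.symm a, σ.symm b, by simpa using h⟩)
    simpa [hsum, mulVec, dotProduct] using
      (hmono i₀).sum_mul_sum_lt_card_mul_sum ⟨σ j, σ k, hBjk, hwjk⟩
  refine ⟨B, hB, fun i => ?_, fun h => (congrFun h i₀).not_lt ?_⟩
  · rw [Pi.smul_apply, smul_eq_mul, div_mul_eq_mul_div, div_le_iff₀ hn]
    linarith [hle i]
  · rw [Pi.smul_apply, smul_eq_mul, div_mul_eq_mul_div, div_lt_iff₀ hn]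
    linarith

theorem exists_mem_Omega_lt_perronRoot (hA : ∀ i j, 0 < A i j)
    (hrow : ∃ i j j', A i j ≠ A i j') (hw : ∃ a b, ∑ j, A a j ≠ ∑ j, A b j) :
    ∃ B ∈ Omega A, (∑ i, ∑ j, A i j) / n < perronRoot B := by
  obtain ⟨B, hB, hle, hne⟩ := exists_mem_Omega_smul_le_mulVec A hrow hw
  have hw₀ : 0 ≤ fun i => ∑ j, A i j := fun i => Finset.sum_nonneg fun j _ => (hA i j).le
  have hT₀ : 0 ≤ (∑ i, ∑ j, A i j) / n :=
    div_nonneg (Finset.sum_nonneg fun i _ => hw₀ i) n.cast_nonneg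
  obtain ⟨r, hr, v, hv, he⟩ :=
    exists_eigenvalue_gt_of_le_mulVec (pos_of_mem_Omega hA hB) hT₀ hw₀ hle hne
  exact ⟨B, hB, hr.trans_le (le_perronRoot (hT₀.trans hr.le) hv he)⟩

end Omega

theorem stmt12 {n : ℕ} (hn : 0 < n) (A : Matrix (Fin n) (Fin n) ℝ)
    (hA : ∀ i j, 0 < A i j) :
    (∑ i, ∑ j, A i j) / n = sSup (perronRoot '' Omega A) ↔
      (A.mulVec (fun _ => 1) = perronRoot A • (fun _ => (1 : ℝ))) ∨
        (∀ i, ∃ c, ∀ j, A i j = c) := by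
  have hn' : (n : ℝ) ≠ 0 := Nat.cast_ne_zero.2 hn.ne'
  constructor
  · intro heq
    by_contra! h
    obtain ⟨hρ, i₀, hi₀⟩ := h
    have hw : ∃ a b, ∑ j, A a j ≠ ∑ j, A b j := by
      by_contra! hconst
      refine hρ (funext fun i => ?_)
      simp [mulVec, dotProduct, hconst i ⟨0, hn⟩,
        perronRoot_eq_of_sum_row_eq hn (fun i j => (hA i j).le) fun i => hconst i ⟨0, hn⟩]
    obtain ⟨B, hB, hlt⟩ := exists_mem_Omega_lt_perronRoot hA
      ⟨i₀, (hi₀ (A i₀ ⟨0, hn⟩)).imp fun j h => ⟨⟨0, hn⟩, h⟩⟩ hw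
    exact (heq ▸ hlt).not_ge (le_csSup (bddAbove_perronRoot_image_Omega A) ⟨B, hB, rfl⟩)
  · rintro (h | h)
    · have hrow : ∀ i, ∑ j, A i j = perronRoot A := fun i => by
        simpa [mulVec, dotProduct] using congrFun h i
      rw [perronRoot_image_Omega_of_sum_row_eq hn hA hrow, csSup_singleton]
      simp [hrow, hn']
    · choose c hc using h
      have hc₀ : ∀ i, 0 < c i := fun i => hc i ⟨0, hn⟩ ▸ hA i _
      rw [perronRoot_image_Omega_of_row_const hc (fun i => (hc₀ i).le)
        (Function.ne_iff.2 ⟨⟨0, hn⟩, (hc₀ _).ne'⟩), csSup_singleton]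
      simp [hc, ← Finset.mul_sum, hn']
end

section
/- Let A be an irreducible nonnegative n×n matrix with positive Perron eigenvector x. Then ρ(A) = max over B ∈ Ω(A) of ρ(B) if and only if for all i, j, k: x_k < x_j implies a_{i,k} ≤ a_{i,j}. -/
open Matrix Finset

/-!
If every row of `A` is ordered like `x`, the rearrangement inequality gives `B x ≤ A x = ρ x`
for every `B ∈ Ω(A)`, and a positive vector with `B x ≤ ρ x` bounds every eigenvalue of `B`
by `ρ`. Conversely, if `x k < x j` but `A i k > A i j`, swapping these two entries of row `i`
gives `B ∈ Ω(A)` with `B x ≥ ρ x`, strictly in row `i`. Irreducibility of `A` lets every index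
reach `i` in the graph of `B`, so a suitable sum `P` of powers of `B` turns `x` into a positive
`y = P x` with `B y ≥ (ρ + η) y`. The Collatz–Wielandt argument (maximize `r` over the compact
set of `(r, v)` with `v` in the simplex and `B v ≥ r v`, first for positive matrices, then for
nonnegative ones by perturbation) produces an eigenvalue of `B` that is at least `ρ + η`.
-/

theorem exists_pos_add_mul_le_of_mul_lt {ι : Type*} [Finite ι] {w z : ι → ℝ} {r : ℝ}
    (h : ∀ i, r * w i < z i) : ∃ η > 0, ∀ i, (r + η) * w i ≤ z i := by
  have hnear : ∀ᶠ η in nhds (0 : ℝ), ∀ i, (r + η) * w i < z i := by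
    refine Filter.eventually_all.2 fun i => ?_
    have hcont : Continuous fun η : ℝ => (r + η) * w i := by fun_prop
    exact hcont.continuousAt.eventually_lt continuousAt_const (by simpa using h i)
  obtain ⟨η, hη, hη0⟩ := ((hnear.filter_mono nhdsWithin_le_nhds).and
    (self_mem_nhdsWithin (s := Set.Ioi (0 : ℝ)))).exists
  exact ⟨η, hη0, fun i => (hη i).le⟩

theorem Fintype.sum_comp_swap_mul {ι : Type*} [Fintype ι] [DecidableEq ι] {j k : ι}
    (hjk : j ≠ k) (f g : ι → ℝ) :
    ∑ m, f (Equiv.swap j k m) * g m = ∑ m, f m * g m + (f k - f j) * (g j - g k) := by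
  rw [← sub_eq_iff_eq_add', ← sum_sub_distrib,
    Fintype.sum_eq_add j k hjk fun m ⟨hmj, hmk⟩ => by
      rw [Equiv.swap_apply_of_ne_of_ne hmj hmk, sub_self]]
  simp only [Equiv.swap_apply_left, Equiv.swap_apply_right]
  ring

namespace Matrix

variable {ι : Type*} [Fintype ι]

theorem abs_le_of_mulVec_le {M : Matrix ι ι ℝ} (hM : ∀ i j, 0 ≤ M i j) {z : ι → ℝ}
    (hz : ∀ i, 0 < z i) {c : ℝ} (hMz : ∀ i, (M *ᵥ z) i ≤ c * z i) {r : ℝ}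
    {v : ι → ℝ} (hv : v ≠ 0) (hMv : M *ᵥ v = r • v) : |r| ≤ c := by
  obtain ⟨l, hl⟩ := Function.ne_iff.mp hv
  have : Nonempty ι := ⟨l⟩
  obtain ⟨i, hi⟩ := Finite.exists_max fun i => |v i| / z i
  set t := |v i| / z i
  have ht : 0 < t := (div_pos (abs_pos.mpr hl) (hz l)).trans_le (hi l)
  have hvt : ∀ j, |v j| ≤ t * z j := fun j => (div_le_iff₀ (hz j)).mp (hi j)
  have key : |r| * (t * z i) ≤ c * (t * z i) := calc
    |r| * (t * z i) = |(M *ᵥ v) i| := by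
      rw [hMv, Pi.smul_apply, smul_eq_mul, abs_mul, div_mul_cancel₀ _ (hz i).ne']
    _ ≤ ∑ j, M i j * |v j| := by
      simp only [mulVec, dotProduct]
      refine (abs_sum_le_sum_abs _ _).trans_eq (sum_congr rfl fun j _ => ?_)
      rw [abs_mul, abs_of_nonneg (hM i j)]
    _ ≤ ∑ j, M i j * (t * z j) := by gcongr with j; exacts [hM i j, hvt j]
    _ = t * (M *ᵥ z) i := by
      simp only [mulVec, dotProduct, mul_sum]; exact sum_congr rfl fun j _ => by ring
    _ ≤ t * (c * z i) := by gcongr; exact hMz i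
    _ = c * (t * z i) := by ring
  exact le_of_mul_le_mul_right key (mul_pos ht (hz i))

theorem mulVec_apply_pos {P : Matrix ι ι ℝ} {u : ι → ℝ} {l j : ι}
    (hP : ∀ k, 0 ≤ P l k) (hu : 0 ≤ u) (hPj : 0 < P l j) (huj : 0 < u j) : 0 < (P *ᵥ u) l :=
  sum_pos' (fun k _ => mul_nonneg (hP k) (hu k)) ⟨j, mem_univ j, mul_pos hPj huj⟩

theorem mulVec_pos_of_pos {C : Matrix ι ι ℝ} (hC : ∀ i j, 0 < C i j) {u : ι → ℝ}
    (hu : 0 ≤ u) (hu0 : u ≠ 0) (i : ι) : 0 < (C *ᵥ u) i := by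
  obtain ⟨j, hj⟩ := Function.ne_iff.mp hu0
  exact mulVec_apply_pos (fun k => (hC i k).le) hu (hC i j) ((hu j).lt_of_ne' hj)

theorem le_sum_sum_of_mul_le_mulVec {C : Matrix ι ι ℝ} (hC : ∀ i j, 0 ≤ C i j)
    {v : ι → ℝ} {r : ℝ} (hv : v ∈ stdSimplex ℝ ι) (h : ∀ i, r * v i ≤ (C *ᵥ v) i) :
    r ≤ ∑ i, ∑ j, C i j := calc
  r = ∑ i, r * v i := by rw [← mul_sum, hv.2, mul_one]
  _ ≤ ∑ i, ∑ j, C i j * v j := sum_le_sum fun i _ => h i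
  _ ≤ ∑ i, ∑ j, C i j := by
    gcongr with i _ j
    calc C i j * v j ≤ C i j * 1 := by
          gcongr; exacts [hC i j, hv.2 ▸ single_le_sum (fun k _ => hv.1 k) (mem_univ j)]
      _ = C i j := mul_one _

theorem exists_mem_stdSimplex_mul_le_mulVec [Nonempty ι] {C : Matrix ι ι ℝ} {w : ι → ℝ}
    (hw : ∀ i, 0 < w i) {r : ℝ} (h : ∀ i, r * w i ≤ (C *ᵥ w) i) :
    ∃ v ∈ stdSimplex ℝ ι, ∀ i, r * v i ≤ (C *ᵥ v) i := by
  have hsum : 0 < ∑ i, w i := sum_pos (fun i _ => hw i) univ_nonempty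
  refine ⟨(∑ i, w i)⁻¹ • w, ⟨fun i => ?_, ?_⟩, fun i => ?_⟩
  · exact mul_nonneg (inv_nonneg.2 hsum.le) (hw i).le
  · simp only [Pi.smul_apply, smul_eq_mul, ← mul_sum, inv_mul_cancel₀ hsum.ne']
  · simp only [mulVec_smul, Pi.smul_apply, smul_eq_mul, mul_left_comm r]
    exact mul_le_mul_of_nonneg_left (h i) (inv_nonneg.2 hsum.le)

theorem exists_eigenvalue_ge_of_pos [Nonempty ι] {C : Matrix ι ι ℝ} (hC : ∀ i j, 0 < C i j)
    {y : ι → ℝ} (hy : ∀ i, 0 < y i) {s : ℝ} (hs : ∀ i, s * y i ≤ (C *ᵥ y) i) :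
    ∃ r ∈ Set.Icc s (∑ i, ∑ j, C i j), ∃ v ∈ stdSimplex ℝ ι, C *ᵥ v = r • v := by
  set R := ∑ i, ∑ j, C i j
  have hbound : ∀ {v r}, v ∈ stdSimplex ℝ ι → (∀ i, r * v i ≤ (C *ᵥ v) i) → r ≤ R :=
    le_sum_sum_of_mul_le_mulVec fun i j => (hC i j).le
  set K := (Set.Icc s R ×ˢ stdSimplex ℝ ι) ∩ {p | ∀ i, p.1 * p.2 i ≤ (C *ᵥ p.2) i}
  have hK : IsCompact K := by
    refine (isCompact_Icc.prod (isCompact_stdSimplex ℝ ι)).inter_right ?_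
    simp only [Set.ofPred_forall]
    exact isClosed_iInter fun i => isClosed_le (by fun_prop) (by fun_prop)
  have hmemK : ∀ {r w}, s ≤ r → (∀ i, 0 < w i) → (∀ i, r * w i ≤ (C *ᵥ w) i) →
      ∃ v, (r, v) ∈ K := fun hsr hw h => by
    obtain ⟨v, hv, hvr⟩ := exists_mem_stdSimplex_mul_le_mulVec hw h
    exact ⟨v, ⟨⟨⟨hsr, hbound hv hvr⟩, hv⟩, hvr⟩⟩
  obtain ⟨⟨r, v⟩, ⟨⟨hr, hv⟩, hrv⟩, hmax⟩ :=
    hK.exists_isMaxOn ⟨_, (hmemK le_rfl hy hs).choose_spec⟩ continuous_fst.continuousOn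
  refine ⟨r, hr, v, hv, ?_⟩
  -- otherwise `C (C v) > r • C v` in every row because `C` is positive, so `r` is not maximal
  by_contra hne
  set u := C *ᵥ v - r • v
  have hu : 0 ≤ u := fun i => sub_nonneg.2 (hrv i)
  have hu0 : u ≠ 0 := sub_ne_zero.2 hne
  have hv0 : v ≠ 0 := fun h => by simpa [h] using hv.2
  have hCCv : C *ᵥ (C *ᵥ v) = r • (C *ᵥ v) + C *ᵥ u := by
    rw [← mulVec_smul, ← mulVec_add, add_sub_cancel]
  have hCw : ∀ i, r * (C *ᵥ v) i < (C *ᵥ (C *ᵥ v)) i := fun i => by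
    rw [hCCv, Pi.add_apply, Pi.smul_apply, smul_eq_mul]
    exact lt_add_of_pos_right _ (mulVec_pos_of_pos hC hu hu0 i)
  obtain ⟨η, hη, hηw⟩ := exists_pos_add_mul_le_of_mul_lt hCw
  obtain ⟨v', hv'⟩ := hmemK (by linarith [hr.1]) (mulVec_pos_of_pos hC hv.1 hv0) hηw
  have := hmax hv'
  simp only [Set.mem_ofPred_eq] at this
  linarith

variable [DecidableEq ι]

theorem det_smul_one_sub_eq_zero_iff {C : Matrix ι ι ℝ} {r : ℝ} :
    (r • 1 - C).det = 0 ↔ ∃ v ≠ 0, C *ᵥ v = r • v := by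
  rw [← exists_mulVec_eq_zero_iff]
  simp only [sub_mulVec, smul_mulVec, one_mulVec, sub_eq_zero, eq_comm]

theorem exists_eigenvalue_ge [Nonempty ι] {C : Matrix ι ι ℝ}
    (hC : ∀ i j, 0 ≤ C i j) {y : ι → ℝ} (hy : ∀ i, 0 < y i) {s : ℝ}
    (hs : ∀ i, s * y i ≤ (C *ᵥ y) i) :
    ∃ r, s ≤ r ∧ ∃ v ≠ 0, C *ᵥ v = r • v := by
  -- eigenvalues of the positive perturbations `C + ε J` converge to a root of `det (r • 1 - C)`
  set J : Matrix ι ι ℝ := of fun _ _ => 1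
  set ε : ℕ → ℝ := fun m => 1 / (m + 1)
  have hε : ∀ m, 0 < ε m ∧ ε m ≤ 1 := fun m =>
    ⟨Nat.one_div_pos_of_nat, div_le_one_of_le₀ (by simp) (by positivity)⟩
  have hpert : ∀ m, ∃ r ∈ Set.Icc s (∑ i, ∑ j, (C i j + 1)),
      (r • 1 - (C + ε m • J)).det = 0 := fun m => by
    have hpos : ∀ i j, 0 < (C + ε m • J) i j := fun i j => by
      simpa [J] using add_pos_of_nonneg_of_pos (hC i j) (hε m).1
    have hsy : ∀ i, s * y i ≤ ((C + ε m • J) *ᵥ y) i := fun i => by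
      refine (hs i).trans ?_
      simp only [mulVec, dotProduct]
      gcongr with j
      · exact (hy j).le
      · simpa [J] using (hε m).1.le
    obtain ⟨r, ⟨hsr, hrR⟩, v, hv, hCv⟩ := exists_eigenvalue_ge_of_pos hpos hy hsy
    refine ⟨r, ⟨hsr, hrR.trans ?_⟩, det_smul_one_sub_eq_zero_iff.2
      ⟨v, fun h => by simpa [h] using hv.2, hCv⟩⟩
    gcongr with i _ j
    simpa [J] using (hε m).2
  choose r hr hdet using hpert
  obtain ⟨r₀, hr₀, φ, hφ, hlim⟩ := isCompact_Icc.tendsto_subseq hr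
  have hεlim : Filter.Tendsto (fun m => ε (φ m)) Filter.atTop (nhds 0) :=
    tendsto_one_div_add_atTop_nhds_zero_nat.comp hφ.tendsto_atTop
  have hF : Continuous fun p : ℝ × ℝ => (p.1 • (1 : Matrix ι ι ℝ) - (C + p.2 • J)).det :=
    Continuous.matrix_det (by fun_prop)
  have hdet₀ := (isClosed_eq hF continuous_const).mem_of_tendsto (hlim.prodMk_nhds hεlim)
    (Filter.Eventually.of_forall fun m => hdet (φ m))
  simp only [Set.mem_ofPred_eq, zero_smul, add_zero] at hdet₀
  exact ⟨r₀, hr₀.1, det_smul_one_sub_eq_zero_iff.1 hdet₀⟩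

theorem exists_pow_apply_pos_of_row_eq {M N : Matrix ι ι ℝ} (hM : ∀ i j, 0 ≤ M i j)
    (hN : ∀ i j, 0 ≤ N i j) {j : ι} (hMN : ∀ l ≠ j, N l = M l) (m : ℕ) (l : ι)
    (h : 0 < (M ^ m) l j) : ∃ m', 0 < (N ^ m') l j := by
  induction m generalizing l with
  | zero => exact ⟨0, by simpa using h⟩
  | succ m ih =>
    by_cases hl : l = j
    · exact ⟨0, by simp [hl]⟩
    rw [pow_succ', mul_apply, sum_pos_iff_of_nonneg fun p _ =>
      mul_nonneg (hM l p) (pow_apply_nonneg hM m p j)] at h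
    obtain ⟨p, -, hp⟩ := h
    obtain ⟨m', hm'⟩ := ih p (pos_of_mul_pos_right hp (hM l p))
    refine ⟨m' + 1, ?_⟩
    rw [pow_succ', mul_apply, sum_pos_iff_of_nonneg fun q _ =>
      mul_nonneg (hN l q) (pow_apply_nonneg hN m' q j)]
    have hlp : 0 < N l p := hMN l hl ▸ pos_of_mul_pos_left hp (pow_apply_nonneg hM m p j)
    exact ⟨p, mem_univ p, mul_pos hlp hm'⟩

theorem exists_eigenvalue_gt {C : Matrix ι ι ℝ} (hC : ∀ i j, 0 ≤ C i j) {x : ι → ℝ}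
    (hx : ∀ i, 0 < x i) {ρ : ℝ} (hle : ∀ i, ρ * x i ≤ (C *ᵥ x) i) {i₀ : ι}
    (hlt : ρ * x i₀ < (C *ᵥ x) i₀) (hreach : ∀ l, ∃ m, 0 < (C ^ m) l i₀) :
    ∃ r, ρ < r ∧ ∃ v ≠ 0, C *ᵥ v = r • v := by
  have : Nonempty ι := ⟨i₀⟩
  choose m hm using hreach
  set P := ∑ l, C ^ m l
  have hP : ∀ a b, 0 ≤ P a b := fun a b => by
    simp only [P, sum_apply]; exact sum_nonneg fun l _ => pow_apply_nonneg hC _ a b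
  have hPi₀ : ∀ l, 0 < P l i₀ := fun l => by
    simp only [P, sum_apply]
    exact (hm l).trans_le (single_le_sum (f := fun k => (C ^ m k) l i₀)
      (fun k _ => pow_apply_nonneg hC _ l i₀) (mem_univ l))
  set u := C *ᵥ x - ρ • x
  have hu : 0 ≤ u := fun i => sub_nonneg.2 (hle i)
  have hui₀ : 0 < u i₀ := sub_pos.2 hlt
  have hCP : C * P = P * C := (Commute.sum_right _ _ _ fun l _ => Commute.self_pow C (m l)).eq
  -- `P` has a positive column `i₀` and commutes with `C`, so it spreads the slack `u i₀ > 0`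
  -- to every row
  have hCPx : C *ᵥ (P *ᵥ x) = ρ • (P *ᵥ x) + P *ᵥ u := by
    rw [mulVec_mulVec, hCP, ← mulVec_mulVec, ← mulVec_smul, ← mulVec_add, add_sub_cancel]
  have hstrict : ∀ l, ρ * (P *ᵥ x) l < (C *ᵥ (P *ᵥ x)) l := fun l => by
    rw [hCPx, Pi.add_apply, Pi.smul_apply, smul_eq_mul]
    exact lt_add_of_pos_right _ (mulVec_apply_pos (hP l) hu (hPi₀ l) hui₀)
  obtain ⟨η, hη, hηPx⟩ := exists_pos_add_mul_le_of_mul_lt hstrict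
  obtain ⟨r, hr, hrv⟩ := exists_eigenvalue_ge hC
    (fun l => mulVec_apply_pos (hP l) (fun i => (hx i).le) (hPi₀ l) (hx i₀)) hηPx
  exact ⟨r, by linarith, hrv⟩

end Matrix

section Perron

variable {n : ℕ}

theorem perronRoot_nonneg (M : Matrix (Fin n) (Fin n) ℝ) : 0 ≤ perronRoot M :=
  Real.sSup_nonneg fun _ hr => hr.1

theorem perronRoot_le_of_mulVec_le {M : Matrix (Fin n) (Fin n) ℝ} (hM : ∀ i j, 0 ≤ M i j)
    {z : Fin n → ℝ} (hz : ∀ i, 0 < z i) {c : ℝ} (hc : 0 ≤ c)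
    (hMz : ∀ i, (M *ᵥ z) i ≤ c * z i) : perronRoot M ≤ c :=
  Real.sSup_le (fun _ ⟨_, _, hv, hMv⟩ =>
    (le_abs_self _).trans (abs_le_of_mulVec_le hM hz hMz hv hMv)) hc

theorem le_perronRoot_s16 {M : Matrix (Fin n) (Fin n) ℝ} (hM : ∀ i j, 0 ≤ M i j) {r : ℝ}
    (hr : 0 ≤ r) {v : Fin n → ℝ} (hv : v ≠ 0) (hMv : M *ᵥ v = r • v) :
    r ≤ perronRoot M := by
  refine le_csSup ⟨∑ i, ∑ j, M i j, fun _ ⟨_, w, hw, hMw⟩ => ?_⟩ ⟨hr, v, hv, hMv⟩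
  refine (le_abs_self _).trans
    (abs_le_of_mulVec_le hM (fun _ => one_pos) (fun i => ?_) hw hMw)
  simpa [mulVec, dotProduct] using single_le_sum (f := fun i => ∑ j, M i j)
    (fun i _ => sum_nonneg fun j _ => hM i j) (mem_univ i)

end Perron

section Omega

variable {n : ℕ} {A B : Matrix (Fin n) (Fin n) ℝ}

theorem mem_Omega_self : A ∈ Omega A :=
  fun _ => ⟨1, fun _ => rfl⟩

theorem nonneg_of_mem_Omega (hA : ∀ i j, 0 ≤ A i j) (hB : B ∈ Omega A) :
    ∀ i j, 0 ≤ B i j := fun i j => by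
    obtain ⟨φ, hφ⟩ := hB i
    exact hφ j ▸ hA i (φ j)

theorem perronRoot_le_of_mem_Omega (hA : ∀ i j, 0 ≤ A i j) (hB : B ∈ Omega A) :
    perronRoot B ≤ ∑ i, ∑ j, A i j := by
  refine perronRoot_le_of_mulVec_le (nonneg_of_mem_Omega hA hB) (fun _ => one_pos)
    (sum_nonneg fun i _ => sum_nonneg fun j _ => hA i j) fun i => ?_
  obtain ⟨φ, hφ⟩ := hB i
  calc (B *ᵥ fun _ => 1) i = ∑ j, A i (φ j) := by simp [mulVec, dotProduct, hφ]
    _ = ∑ j, A i j := Equiv.sum_comp φ (A i)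
    _ ≤ (∑ i, ∑ j, A i j) * 1 := by
      rw [mul_one]
      exact single_le_sum (f := fun i => ∑ j, A i j)
        (fun i _ => sum_nonneg fun j _ => hA i j) (mem_univ i)

theorem bddAbove_perronRoot_image_Omega_s16 (hA : ∀ i j, 0 ≤ A i j) :
    BddAbove (perronRoot '' Omega A) :=
  ⟨_, Set.forall_mem_image.2 fun _ hB => perronRoot_le_of_mem_Omega hA hB⟩

theorem perronRoot_le_of_mem_Omega_of_monovary (hA : ∀ i j, 0 ≤ A i j) {x : Fin n → ℝ}
    (hx : ∀ i, 0 < x i) {ρ : ℝ} (hρ : 0 ≤ ρ) (hAx : ∀ i, (A *ᵥ x) i ≤ ρ * x i)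
    (hmono : ∀ i, Monovary (A i) x) (hB : B ∈ Omega A) : perronRoot B ≤ ρ := by
  refine perronRoot_le_of_mulVec_le (nonneg_of_mem_Omega hA hB) hx hρ fun i => ?_
  obtain ⟨φ, hφ⟩ := hB i
  calc (B *ᵥ x) i = ∑ j, A i (φ j) * x j := by simp [mulVec, dotProduct, hφ]
    _ ≤ (A *ᵥ x) i := (hmono i).sum_comp_perm_mul_le_sum_mul
    _ ≤ ρ * x i := hAx i

theorem exists_mem_Omega_lt_perronRoot_s16 (hA : ∀ i j, 0 ≤ A i j) (hirr : Irred A)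
    {x : Fin n → ℝ} (hx : ∀ i, 0 < x i) {ρ : ℝ} (hρ : 0 ≤ ρ)
    (hAx : ∀ i, ρ * x i ≤ (A *ᵥ x) i) {i₀ j k : Fin n} (hxjk : x k < x j)
    (hAjk : A i₀ j < A i₀ k) : ∃ B ∈ Omega A, ρ < perronRoot B := by
  have hjk : j ≠ k := fun h => (h ▸ hxjk).false
  set B := updateRow A i₀ fun m => A i₀ (Equiv.swap j k m)
  have hrow : ∀ l ≠ i₀, B l = A l := fun l hl => updateRow_ne hl
  have hBΩ : B ∈ Omega A := fun l => by
    by_cases hl : l = i₀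
    · exact ⟨Equiv.swap j k, fun m => by simp [B, hl]⟩
    · exact ⟨1, fun m => by rw [hrow l hl]; rfl⟩
  have hB := nonneg_of_mem_Omega hA hBΩ
  have hBxi₀ : (B *ᵥ x) i₀ = (A *ᵥ x) i₀ + (A i₀ k - A i₀ j) * (x j - x k) := by
    simp only [mulVec, dotProduct, B, updateRow_self]
    exact Fintype.sum_comp_swap_mul hjk _ _
  have hlt : ρ * x i₀ < (B *ᵥ x) i₀ := by
    rw [hBxi₀]
    nlinarith [hAx i₀, mul_pos (sub_pos.2 hAjk) (sub_pos.2 hxjk)]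
  have hle : ∀ l, ρ * x l ≤ (B *ᵥ x) l := fun l => by
    by_cases hl : l = i₀
    · exact hl ▸ hlt.le
    · simpa only [mulVec, hrow l hl] using hAx l
  have hreach : ∀ l, ∃ m, 0 < (B ^ m) l i₀ := fun l => by
    obtain ⟨m, -, hm⟩ := hirr l i₀
    exact exists_pow_apply_pos_of_row_eq hA hB hrow m l hm
  obtain ⟨r, hρr, v, hv, hBv⟩ := exists_eigenvalue_gt hB hx hle hlt hreach
  exact ⟨B, hBΩ, hρr.trans_le (le_perronRoot_s16 hB (hρ.trans hρr.le) hv hBv)⟩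

end Omega

theorem stmt16 {n : ℕ} (A : Matrix (Fin n) (Fin n) ℝ) (hA : ∀ i j, 0 ≤ A i j)
    (hirr : Irred A) (x : Fin n → ℝ) (hxpos : ∀ i, 0 < x i)
    (heig : A.mulVec x = perronRoot A • x) :
    perronRoot A = sSup (perronRoot '' Omega A) ↔
      (∀ i j k, x k < x j → A i k ≤ A i j) := by
  have hAx : ∀ i, (A *ᵥ x) i = perronRoot A * x i := fun i => by rw [heig]; rfl
  constructor
  · intro hsup i j k hxjk
    by_contra! hAjk
    obtain ⟨B, hB, hlt⟩ := exists_mem_Omega_lt_perronRoot_s16 hA hirr hxpos (perronRoot_nonneg A)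
      (fun i => (hAx i).ge) hxjk hAjk
    exact (le_csSup (bddAbove_perronRoot_image_Omega_s16 hA) ⟨B, hB, rfl⟩).not_gt (hsup ▸ hlt)
  · intro hmono
    refine Eq.symm (IsGreatest.csSup_eq ⟨⟨A, mem_Omega_self, rfl⟩, ?_⟩)
    rintro _ ⟨B, hB, rfl⟩
    exact perronRoot_le_of_mem_Omega_of_monovary hA hxpos (perronRoot_nonneg A)
      (fun i => (hAx i).le) (fun i _ _ => hmono i _ _) hB
end
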